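/- arXiv:1404.3466 — 6 statements merged into one kernel-verified Lean document; each statement's English description precedes it below -/
import Mathlib

section
/- Let M : Fin m → Fin n → Bool be a presence–absence matrix, let i ≠ j be two rows, let A' be a finite set of columns on which M i is true and M j is false, let B' be a finite set of columns on which M j is true and M i is false, and suppose A' and B' have the same cardinality. Define N to agree with M everywhere except that for columns c ∈ A' one sets N i c = false and N j c = true, and for columns c ∈ B' one sets N i c = true and N j c = false. Then every row sum of N equals the corresponding row sum of M, and every column sum of N equals the corresponding column sum of M. -/
/-- The row sum of row `i`: the number of columns `c` with `M i c = true`. -/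
def rowSum {m n : ℕ} (M : Fin m → Fin n → Bool) (i : Fin m) : ℕ :=
  (Finset.univ.filter fun c => M i c = true).card

/-- The column sum of column `c`: the number of rows `i` with `M i c = true`. -/
def colSum {m n : ℕ} (M : Fin m → Fin n → Bool) (c : Fin n) : ℕ :=
  (Finset.univ.filter fun i => M i c = true).card

/-- A trade between two rows `i ≠ j`, exchanging a set `A'` of columns exclusive to
row `i` with an equally sized set `B'` of columns exclusive to row `j`, preserves
all row sums and all column sums. -/
theorem trade_preserves_margins {m n : ℕ}
    (M N : Fin m → Fin n → Bool) (i j : Fin m) (hij : i ≠ j)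
    (A' B' : Finset (Fin n))
    (hA : ∀ c ∈ A', M i c = true ∧ M j c = false)
    (hB : ∀ c ∈ B', M j c = true ∧ M i c = false)
    (hcard : A'.card = B'.card)
    (hNi : ∀ c, N i c = if c ∈ A' then false else if c ∈ B' then true else M i c)
    (hNj : ∀ c, N j c = if c ∈ A' then true else if c ∈ B' then false else M j c)
    (hNother : ∀ r, r ≠ i → r ≠ j → ∀ c, N r c = M r c) :
    (∀ r, rowSum N r = rowSum M r) ∧ (∀ c, colSum N c = colSum M c) := by
  have hAB : ∀ c, c ∈ A' → c ∈ B' → False := by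
    intro c hcA hcB
    have h1 := (hA c hcA).1
    have h2 := (hB c hcB).2
    simp [h1] at h2
  constructor
  · intro r
    by_cases hri : r = i
    · subst hri
      have hset : (Finset.univ.filter fun c => N r c = true)
          = ((Finset.univ.filter fun c => M r c = true) \ A') ∪ B' := by
        ext c
        simp only [Finset.mem_union, Finset.mem_sdiff, Finset.mem_filter, Finset.mem_univ,
          true_and, hNi c]
        by_cases hcA : c ∈ A'
        · have hnB : c ∉ B' := fun h => hAB c hcA h
          simp [hcA, hnB]
        · by_cases hcB : c ∈ B'
          · simp [hcA, hcB]
          · simp [hcA, hcB]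
      have hsubA : A' ⊆ (Finset.univ.filter fun c => M r c = true) := by
        intro c hc; simp [(hA c hc).1]
      have hdisj : Disjoint ((Finset.univ.filter fun c => M r c = true) \ A') B' := by
        rw [Finset.disjoint_right]
        intro c hc hcd
        rcases Finset.mem_sdiff.mp hcd with ⟨hc1, _⟩
        have := (hB c hc).2
        simp at hc1
        simp [hc1] at this
      have hA'le : A'.card ≤ (Finset.univ.filter fun c => M r c = true).card :=
        Finset.card_le_card hsubA
      rw [rowSum, rowSum, hset, Finset.card_union_of_disjoint hdisj,
        Finset.card_sdiff_of_subset hsubA]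
      omega
    · by_cases hrj : r = j
      · subst hrj
        have hset : (Finset.univ.filter fun c => N r c = true)
            = ((Finset.univ.filter fun c => M r c = true) \ B') ∪ A' := by
          ext c
          simp only [Finset.mem_union, Finset.mem_sdiff, Finset.mem_filter, Finset.mem_univ,
            true_and, hNj c]
          by_cases hcA : c ∈ A'
          · simp [hcA, fun h => hAB c hcA h]
          · by_cases hcB : c ∈ B'
            · simp [hcA, hcB]
            · simp [hcA, hcB]
        have hsubB : B' ⊆ (Finset.univ.filter fun c => M r c = true) := by
          intro c hc; simp [(hB c hc).1]
        have hdisj : Disjoint ((Finset.univ.filter fun c => M r c = true) \ B') A' := by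
          rw [Finset.disjoint_right]
          intro c hc hcd
          rcases Finset.mem_sdiff.mp hcd with ⟨hc1, _⟩
          have := (hA c hc).2
          simp at hc1
          simp [hc1] at this
        have hB'le : B'.card ≤ (Finset.univ.filter fun c => M r c = true).card :=
          Finset.card_le_card hsubB
        rw [rowSum, rowSum, hset, Finset.card_union_of_disjoint hdisj,
          Finset.card_sdiff_of_subset hsubB]
        omega
      · unfold rowSum
        congr 1
        apply Finset.filter_congr
        intro c _
        rw [hNother r hri hrj c]
  · intro c
    have key : ∀ (P : Fin m → Fin n → Bool),
        colSum P c = ∑ r, (if P r c = true then 1 else 0) := by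
      intro P
      rw [colSum, Finset.card_filter]
    rw [key N, key M]
    have hjmem : j ∈ Finset.univ.erase i := Finset.mem_erase.mpr ⟨(Ne.symm hij), Finset.mem_univ j⟩
    rw [← Finset.add_sum_erase _ _ (Finset.mem_univ i),
        ← Finset.add_sum_erase _ _ hjmem,
        ← Finset.add_sum_erase (f := fun r => if M r c = true then 1 else 0) _ (Finset.mem_univ i),
        ← Finset.add_sum_erase (f := fun r => if M r c = true then 1 else 0) _ hjmem]
    have htail : ∑ r ∈ (Finset.univ.erase i).erase j, (if N r c = true then 1 else 0)
        = ∑ r ∈ (Finset.univ.erase i).erase j, (if M r c = true then 1 else 0) := by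
      apply Finset.sum_congr rfl
      intro r hr
      rcases Finset.mem_erase.mp hr with ⟨hrj, hr2⟩
      rcases Finset.mem_erase.mp hr2 with ⟨hri, _⟩
      rw [hNother r hri hrj c]
    rw [htail]
    have hij2 : (if N i c = true then 1 else 0) + (if N j c = true then 1 else 0)
        = (if M i c = true then 1 else 0) + (if M j c = true then 1 else 0) := by
      rw [hNi c, hNj c]
      by_cases hcA : c ∈ A'
      · simp [hcA, (hA c hcA).1, (hA c hcA).2]
      · by_cases hcB : c ∈ B'
        · simp [hcA, hcB, (hB c hcB).1, (hB c hcB).2]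
        · simp [hcA, hcB]
    omega
end

section
/- Let M : Fin m → Fin n → Bool be a presence–absence matrix. The total number of checkerboard units of M, i.e., the number of triples consisting of an unordered pair of rows {i, j} and an ordered pair of columns (k, l) with M i k = true, M j k = false, M i l = false, M j l = true, equals the sum over all unordered row pairs {i, j} of (R_i − S_{ij})·(R_j − S_{ij}), where R_i is the row sum of row i and S_{ij} is the number of columns on which both rows i and j are true. -/
/-- `S_{ij}`: the number of columns on which both rows `i` and `j` are true. -/
def sharedCols {m n : ℕ} (M : Fin m → Fin n → Bool) (i j : Fin m) : ℕ :=
  (Finset.univ.filter fun c => M i c = true ∧ M j c = true).card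

lemma diff_count {m n : ℕ} (M : Fin m → Fin n → Bool) (i j : Fin m) :
    (Finset.univ.filter fun c => M i c = true ∧ M j c = false).card =
      rowSum M i - sharedCols M i j := by
  have h := Finset.card_filter_add_card_filter_not
    (s := Finset.univ.filter fun c : Fin n => M i c = true) (p := fun c => M j c = true)
  rw [Finset.filter_filter, Finset.filter_filter] at h
  have h1 : (Finset.univ.filter fun c : Fin n => M i c = true ∧ ¬ M j c = true) =
      Finset.univ.filter fun c => M i c = true ∧ M j c = false := by
    apply Finset.filter_congr; intro c _; simp
  rw [h1] at h
  unfold rowSum sharedCols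
  omega

/-- The total number of checkerboard units of `M` — triples consisting of an unordered
pair of rows `{i, j}` (represented by `i < j`) and an ordered pair of columns `(k, l)`
with `M i k = true`, `M j k = false`, `M i l = false`, `M j l = true` — equals the sum
over all unordered row pairs `{i, j}` of `(R_i − S_{ij}) * (R_j − S_{ij})`. -/
theorem total_checkerboard_count {m n : ℕ} (M : Fin m → Fin n → Bool) :
    (Finset.univ.filter fun q : (Fin m × Fin m) × Fin n × Fin n =>
        q.1.1 < q.1.2 ∧ M q.1.1 q.2.1 = true ∧ M q.1.2 q.2.1 = false ∧
          M q.1.1 q.2.2 = false ∧ M q.1.2 q.2.2 = true).card =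
      ∑ q ∈ Finset.univ.filter (fun q : Fin m × Fin m => q.1 < q.2),
        (rowSum M q.1 - sharedCols M q.1 q.2) * (rowSum M q.2 - sharedCols M q.1 q.2) := by
  rw [Finset.card_filter, Fintype.sum_prod_type, Finset.sum_filter]
  congr 1
  ext p
  by_cases hp : p.1 < p.2
  · simp only [hp, true_and, if_true]
    have : ∀ k l : Fin n,
        (if M p.1 k = true ∧ M p.2 k = false ∧ M p.1 l = false ∧ M p.2 l = true
          then (1:ℕ) else 0) =
        (if M p.1 k = true ∧ M p.2 k = false then (1:ℕ) else 0) *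
        (if M p.1 l = false ∧ M p.2 l = true then (1:ℕ) else 0) := by
      intro k l
      cases hA : M p.1 k <;> cases hB : M p.2 k <;> cases hC : M p.1 l <;>
        cases hD : M p.2 l <;> simp [hA, hB, hC, hD]
    rw [Fintype.sum_prod_type]
    simp only [this]
    rw [← Finset.sum_mul_sum]
    rw [← Finset.card_filter, ← Finset.card_filter]
    rw [diff_count M p.1 p.2]
    have hsym : sharedCols M p.1 p.2 = sharedCols M p.2 p.1 := by
      unfold sharedCols; congr 1
      apply Finset.filter_congr; intro c _; tauto
    have h2 : (Finset.univ.filter fun c : Fin n => M p.1 c = false ∧ M p.2 c = true).card =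
        rowSum M p.2 - sharedCols M p.1 p.2 := by
      rw [hsym, ← diff_count M p.2 p.1]
      congr 1
      apply Finset.filter_congr; intro c _; tauto
    rw [h2]
  · simp [hp]
end

section
/- (Connectivity of the swap chain.) Let M, N : Fin m → Fin n → Bool be presence–absence matrices such that every row sum of M equals the corresponding row sum of N and every column sum of M equals the corresponding column sum of N. Then N can be obtained from M by a finite sequence of checkerboard swaps, i.e., (M, N) lies in the reflexive–transitive closure of the swap relation. -/
/-- The swap relation: `N` is obtained from `M` by swapping one checkerboard unit. -/
def IsSwap {m n : ℕ} (M N : Fin m → Fin n → Bool) : Prop :=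
  ∃ (i j : Fin m) (k l : Fin n), i ≠ j ∧ k ≠ l ∧
    M i k = true ∧ M i l = false ∧ M j k = false ∧ M j l = true ∧
    N i k = false ∧ N i l = true ∧ N j k = true ∧ N j l = false ∧
    ∀ r c, ((r ≠ i ∧ r ≠ j) ∨ (c ≠ k ∧ c ≠ l)) → N r c = M r c

/-- The matrix obtained from `M` by a checkerboard swap at rows `i,j` and columns `k,l`. -/
def swapAt {m n : ℕ} (M : Fin m → Fin n → Bool) (i j : Fin m) (k l : Fin n) :
    Fin m → Fin n → Bool :=
  fun r c =>
    if r = i ∧ c = k then false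
    else if r = i ∧ c = l then true
    else if r = j ∧ c = k then true
    else if r = j ∧ c = l then false
    else M r c

lemma isSwap_swapAt {m n : ℕ} {M : Fin m → Fin n → Bool} {i j : Fin m} {k l : Fin n}
    (hij : i ≠ j) (hkl : k ≠ l) (h1 : M i k = true) (h2 : M i l = false)
    (h3 : M j k = false) (h4 : M j l = true) : IsSwap M (swapAt M i j k l) := by
  refine ⟨i, j, k, l, hij, hkl, h1, h2, h3, h4, ?_, ?_, ?_, ?_, ?_⟩
  · simp [swapAt]
  · simp [swapAt, hkl.symm]
  · simp [swapAt, hij.symm]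
  · simp [swapAt, hij.symm, hkl.symm]
  · rintro r c (⟨hr1, hr2⟩ | ⟨hc1, hc2⟩)
    · simp [swapAt, hr1, hr2]
    · simp [swapAt, hc1, hc2]

lemma isSwap_symm {m n : ℕ} {M N : Fin m → Fin n → Bool} (h : IsSwap M N) : IsSwap N M := by
  obtain ⟨i, j, k, l, hij, hkl, h1, h2, h3, h4, h5, h6, h7, h8, hoff⟩ := h
  refine ⟨i, j, l, k, hij, hkl.symm, h6, h5, h8, h7, h2, h1, h4, h3, ?_⟩
  rintro r c (⟨hr1, hr2⟩ | ⟨hc1, hc2⟩)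
  · exact (hoff r c (Or.inl ⟨hr1, hr2⟩)).symm
  · exact (hoff r c (Or.inr ⟨hc2, hc1⟩)).symm

/-- Moving a single `true` from position `k` to position `l` preserves the count of `true`s. -/
lemma card_filter_move {α : Type*} [Fintype α] [DecidableEq α] {f g : α → Bool} {k l : α}
    (hkl : k ≠ l) (hfk : f k = true) (hfl : f l = false) (hgk : g k = false) (hgl : g l = true)
    (hoff : ∀ c, c ≠ k → c ≠ l → g c = f c) :
    (Finset.univ.filter fun c => g c = true).card =
      (Finset.univ.filter fun c => f c = true).card := by
  have hset : (Finset.univ.filter fun c => g c = true) =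
      insert l ((Finset.univ.filter fun c => f c = true).erase k) := by
    ext c
    simp only [Finset.mem_filter, Finset.mem_univ, true_and, Finset.mem_insert,
      Finset.mem_erase]
    by_cases hc1 : c = l
    · subst hc1; simp [hgl]
    · by_cases hc2 : c = k
      · subst hc2; simp [hgk, hkl, hfk]
      · simp [hc1, hc2, hoff c hc2 hc1]
  have hkmem : k ∈ (Finset.univ.filter fun c => f c = true) := by simp [hfk]
  have hlnot : l ∉ (Finset.univ.filter fun c => f c = true).erase k := by
    simp [hfl]
  rw [hset, Finset.card_insert_of_notMem hlnot, Finset.card_erase_of_mem hkmem]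
  have : 1 ≤ (Finset.univ.filter fun c => f c = true).card :=
    Finset.card_pos.mpr ⟨k, hkmem⟩
  omega

section Swap
variable {m n : ℕ} {M : Fin m → Fin n → Bool} {i j : Fin m} {k l : Fin n}

lemma rowSum_swapAt (hij : i ≠ j) (hkl : k ≠ l) (h1 : M i k = true) (h2 : M i l = false)
    (h3 : M j k = false) (h4 : M j l = true) :
    ∀ r, rowSum (swapAt M i j k l) r = rowSum M r := by
  intro r
  by_cases hri : r = i
  · subst hri
    refine card_filter_move hkl h1 h2 ?_ ?_ ?_
    · simp [swapAt]
    · simp [swapAt, hkl.symm]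
    · intro c hc1 hc2; simp [swapAt, hc1, hc2]
  · by_cases hrj : r = j
    · subst hrj
      refine card_filter_move hkl.symm h4 h3 ?_ ?_ ?_
      · simp [swapAt, hij.symm, hkl.symm]
      · simp [swapAt, hij.symm]
      · intro c hc1 hc2; simp [swapAt, hc1, hc2]
    · unfold rowSum
      congr 1
      apply Finset.filter_congr
      intro c _
      simp [swapAt, hri, hrj]

lemma colSum_swapAt (hij : i ≠ j) (hkl : k ≠ l) (h1 : M i k = true) (h2 : M i l = false)
    (h3 : M j k = false) (h4 : M j l = true) :
    ∀ c, colSum (swapAt M i j k l) c = colSum M c := by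
  intro c
  by_cases hck : c = k
  · subst hck
    refine card_filter_move hij h1 h3 ?_ ?_ ?_
    · simp [swapAt]
    · simp [swapAt, hij.symm]
    · intro r hr1 hr2; simp [swapAt, hr1, hr2]
  · by_cases hcl : c = l
    · subst hcl
      refine card_filter_move hij.symm h4 h2 ?_ ?_ ?_
      · simp [swapAt, hij.symm, hkl.symm]
      · simp [swapAt, hkl.symm]
      · intro r hr1 hr2; simp [swapAt, hr1, hr2]
    · unfold colSum
      congr 1
      apply Finset.filter_congr
      intro r _
      simp [swapAt, hck, hcl]

end Swap

/-- Hamming distance between two Boolean matrices. -/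
def dd {m n : ℕ} (M N : Fin m → Fin n → Bool) : ℕ :=
  (Finset.univ.filter fun p : Fin m × Fin n => M p.1 p.2 ≠ N p.1 p.2).card

lemma dd_comm {m n : ℕ} (M N : Fin m → Fin n → Bool) : dd M N = dd N M := by
  unfold dd
  congr 1
  apply Finset.filter_congr
  intro p _
  simp [ne_comm]

lemma eq_of_dd_eq_zero {m n : ℕ} {M N : Fin m → Fin n → Bool} (h : dd M N = 0) : M = N := by
  funext r c
  by_contra hc
  have : (r, c) ∈ (Finset.univ.filter fun p : Fin m × Fin n => M p.1 p.2 ≠ N p.1 p.2) := by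
    simp [hc]
  have := Finset.card_pos.mpr ⟨(r, c), this⟩
  unfold dd at h
  omega

lemma dd_swapAt_lt {m n : ℕ} {A B : Fin m → Fin n → Bool} {i j : Fin m} {k l : Fin n}
    (hij : i ≠ j) (hkl : k ≠ l) (h1 : A i k = true) (h2 : A i l = false)
    (h3 : A j k = false) (h4 : A j l = true)
    (hlt : (B i k).toNat + (B j l).toNat < (B i l).toNat + (B j k).toNat) :
    dd (swapAt A i j k l) B < dd A B := by
  classical
  set T : Finset (Fin m × Fin n) := {(i, k), (i, l), (j, k), (j, l)} with hT
  have hTsub : T ⊆ Finset.univ := Finset.subset_univ T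
  have key : ∀ (C : Fin m → Fin n → Bool),
      dd C B = ∑ p ∈ Finset.univ \ T, (if C p.1 p.2 ≠ B p.1 p.2 then 1 else 0)
        + ∑ p ∈ T, (if C p.1 p.2 ≠ B p.1 p.2 then 1 else 0) := by
    intro C
    rw [dd, Finset.card_filter, ← Finset.sum_sdiff hTsub]
  rw [key, key]
  have hoffeq : ∀ p ∈ Finset.univ \ T,
      (if swapAt A i j k l p.1 p.2 ≠ B p.1 p.2 then 1 else 0)
        = (if A p.1 p.2 ≠ B p.1 p.2 then (1:ℕ) else 0) := by
    intro p hp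
    simp only [Finset.mem_sdiff, hT, Finset.mem_insert, Finset.mem_singleton] at hp
    obtain ⟨-, hp⟩ := hp
    push_neg at hp
    obtain ⟨q1, q2, q3, q4⟩ := hp
    have : swapAt A i j k l p.1 p.2 = A p.1 p.2 := by
      have e1 : ¬(p.1 = i ∧ p.2 = k) := by
        intro ⟨a, b⟩; exact q1 (by rw [← a, ← b])
      have e2 : ¬(p.1 = i ∧ p.2 = l) := by
        intro ⟨a, b⟩; exact q2 (by rw [← a, ← b])
      have e3 : ¬(p.1 = j ∧ p.2 = k) := by
        intro ⟨a, b⟩; exact q3 (by rw [← a, ← b])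
      have e4 : ¬(p.1 = j ∧ p.2 = l) := by
        intro ⟨a, b⟩; exact q4 (by rw [← a, ← b])
      simp [swapAt, e1, e2, e3, e4]
    rw [this]
  rw [Finset.sum_congr rfl hoffeq]
  apply Nat.add_lt_add_left
  -- expand the sums over the four points
  have hd1 : ((i, k) : Fin m × Fin n) ≠ (i, l) := by simp [Prod.ext_iff, hkl]
  have hd2 : ((i, k) : Fin m × Fin n) ≠ (j, k) := by simp [Prod.ext_iff, hij]
  have hd3 : ((i, k) : Fin m × Fin n) ≠ (j, l) := by simp [Prod.ext_iff, hij]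
  have hd4 : ((i, l) : Fin m × Fin n) ≠ (j, k) := by simp [Prod.ext_iff, hij]
  have hd5 : ((i, l) : Fin m × Fin n) ≠ (j, l) := by simp [Prod.ext_iff, hij]
  have hd6 : ((j, k) : Fin m × Fin n) ≠ (j, l) := by simp [Prod.ext_iff, hkl]
  have expand : ∀ (f : Fin m × Fin n → ℕ),
      ∑ p ∈ T, f p = f (i, k) + f (i, l) + f (j, k) + f (j, l) := by
    intro f
    rw [hT]
    rw [Finset.sum_insert (by simp [hd1, hd2, hd3]),
      Finset.sum_insert (by simp [hd4, hd5]),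
      Finset.sum_insert (by simp [hd6]), Finset.sum_singleton]
    ring
  rw [expand, expand]
  have s1 : swapAt A i j k l i k = false := by simp [swapAt]
  have s2 : swapAt A i j k l i l = true := by simp [swapAt, hkl.symm]
  have s3 : swapAt A i j k l j k = true := by simp [swapAt, hij.symm]
  have s4 : swapAt A i j k l j l = false := by simp [swapAt, hij.symm, hkl.symm]
  simp only [s1, s2, s3, s4, h1, h2, h3, h4]
  rcases Bool.dichotomy (B i k) with hb1 | hb1 <;>
  rcases Bool.dichotomy (B i l) with hb2 | hb2 <;>
  rcases Bool.dichotomy (B j k) with hb3 | hb3 <;>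
  rcases Bool.dichotomy (B j l) with hb4 | hb4 <;>
    simp [hb1, hb2, hb3, hb4] at hlt ⊢

lemma colSum_cast {m n : ℕ} (M : Fin m → Fin n → Bool) (c : Fin n) :
    (colSum M c : ℤ) = ∑ r, ((M r c).toNat : ℤ) := by
  rw [colSum, Finset.card_filter]
  push_cast
  apply Finset.sum_congr rfl
  intro r _
  rcases Bool.dichotomy (M r c) with h | h <;> simp [h]

/-- If the matrices differ, there is a row with a `(true, false)` / `(false, true)` pair. -/
lemma exists_config {m n : ℕ} {M N : Fin m → Fin n → Bool}
    (hrow : ∀ i, rowSum M i = rowSum N i) (hne : M ≠ N) :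
    ∃ (i : Fin m) (k l : Fin n), k ≠ l ∧
      M i k = true ∧ N i k = false ∧ M i l = false ∧ N i l = true := by
  have : ∃ i c, M i c ≠ N i c := by
    by_contra hc
    push_neg at hc
    exact hne (funext fun i => funext fun c => hc i c)
  obtain ⟨i, c, hic⟩ := this
  rcases Bool.dichotomy (M i c) with hM | hM
  · -- M i c = false, N i c = true : find k with M i k = true, N i k = false
    have hN : N i c = true := by
      rcases Bool.dichotomy (N i c) with h | h
      · exact absurd (hM ▸ h ▸ rfl) hic
      · exact h
    have : ∃ k, M i k = true ∧ N i k = false := by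
      by_contra hk
      push_neg at hk
      have hsub : (Finset.univ.filter fun d => M i d = true) ⊆
          (Finset.univ.filter fun d => N i d = true) := by
        intro d hd
        simp only [Finset.mem_filter, Finset.mem_univ, true_and] at hd ⊢
        rcases Bool.dichotomy (N i d) with h | h
        · exact absurd h (hk d hd)
        · exact h
      have hss : (Finset.univ.filter fun d => M i d = true) ⊂
          (Finset.univ.filter fun d => N i d = true) := by
        refine ⟨hsub, fun hsub' => ?_⟩
        have := hsub' (by simp [hN] : c ∈ _)
        simp only [Finset.mem_filter, Finset.mem_univ, true_and] at this
        rw [this] at hM; exact absurd hM (by simp)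
      have := Finset.card_lt_card hss
      have := hrow i
      unfold rowSum at this
      omega
    obtain ⟨k, hk1, hk2⟩ := this
    refine ⟨i, k, c, ?_, hk1, hk2, hM, hN⟩
    intro h; rw [h, hM] at hk1; exact absurd hk1 (by simp)
  · -- M i c = true, N i c = false : find l with M i l = false, N i l = true
    have hN : N i c = false := by
      rcases Bool.dichotomy (N i c) with h | h
      · exact h
      · exact absurd (hM ▸ h ▸ rfl) hic
    have : ∃ l, M i l = false ∧ N i l = true := by
      by_contra hl
      push_neg at hl
      have hsub : (Finset.univ.filter fun d => N i d = true) ⊆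
          (Finset.univ.filter fun d => M i d = true) := by
        intro d hd
        simp only [Finset.mem_filter, Finset.mem_univ, true_and] at hd ⊢
        rcases Bool.dichotomy (M i d) with h | h
        · exact absurd hd (hl d h)
        · exact h
      have hss : (Finset.univ.filter fun d => N i d = true) ⊂
          (Finset.univ.filter fun d => M i d = true) := by
        refine ⟨hsub, fun hsub' => ?_⟩
        have := hsub' (by simp [hM] : c ∈ _)
        simp only [Finset.mem_filter, Finset.mem_univ, true_and] at this
        rw [this] at hN; exact absurd hN (by simp)
      have := Finset.card_lt_card hss
      have := hrow i
      unfold rowSum at this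
      omega
    obtain ⟨l, hl1, hl2⟩ := this
    refine ⟨i, c, l, ?_, hM, hN, hl1, hl2⟩
    intro h; rw [← h, hM] at hl1; exact absurd hl1 (by simp)

lemma exists_witness_row {m n : ℕ} {M N : Fin m → Fin n → Bool} {i : Fin m} {k l : Fin n}
    (hcol : ∀ c, colSum M c = colSum N c)
    (h1 : M i k = true) (h2 : N i k = false) (h3 : M i l = false) (h4 : N i l = true) :
    ∃ j, j ≠ i ∧ (((M j k).toNat : ℤ) - (M j l).toNat <
      ((N j k).toNat : ℤ) - (N j l).toNat) := by
  by_contra hcon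
  push_neg at hcon
  set D : Fin m → ℤ := fun r =>
    (((M r k).toNat : ℤ) - (M r l).toNat) - (((N r k).toNat : ℤ) - (N r l).toNat) with hD
  have hsum : ∑ r, D r = 0 := by
    have e1 := colSum_cast M k
    have e2 := colSum_cast M l
    have e3 := colSum_cast N k
    have e4 := colSum_cast N l
    have e5 := hcol k
    have e6 := hcol l
    simp only [hD, Finset.sum_sub_distrib]
    rw [← e1, ← e2, ← e3, ← e4, e5, e6]
    ring
  have hDi : D i = 2 := by simp [hD, h1, h2, h3, h4]
  have hnn : ∀ j ∈ Finset.univ.erase i, 0 ≤ D j := by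
    intro j hj
    have := hcon j (Finset.ne_of_mem_erase hj)
    simpa only [hD, sub_nonneg] using this
  have hsplit := Finset.add_sum_erase Finset.univ D (Finset.mem_univ i)
  have := Finset.sum_nonneg hnn
  rw [← hsplit, hDi] at hsum
  linarith


/-- Connectivity of the swap chain: if `M` and `N` have the same row sums and the same
column sums, then `N` can be obtained from `M` by a finite sequence of checkerboard
swaps, i.e. `(M, N)` lies in the reflexive–transitive closure of the swap relation. -/
theorem swap_chain_connectivity {m n : ℕ} (M N : Fin m → Fin n → Bool)
    (hrow : ∀ i, rowSum M i = rowSum N i) (hcol : ∀ c, colSum M c = colSum N c) :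
    Relation.ReflTransGen IsSwap M N := by
  have key : ∀ d (M N : Fin m → Fin n → Bool), dd M N ≤ d →
      (∀ i, rowSum M i = rowSum N i) → (∀ c, colSum M c = colSum N c) →
      Relation.ReflTransGen IsSwap M N := by
    intro d
    induction d with
    | zero =>
      intro M N hd _ _
      rw [eq_of_dd_eq_zero (Nat.le_zero.mp hd)]
    | succ d ih =>
      intro M N hd hr hc
      by_cases hMN : M = N
      · rw [hMN]
      · obtain ⟨i, k, l, hkl, h1, h2, h3, h4⟩ := exists_config hr hMN
        obtain ⟨j, hji, hfg⟩ := exists_witness_row hc h1 h2 h3 h4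
        have hcase : (M j k = false ∧ M j l = true ∧ ¬(N j k = false ∧ N j l = true)) ∨
            (N j k = true ∧ N j l = false ∧ ¬(M j k = true ∧ M j l = false)) := by
          rcases Bool.dichotomy (M j k) with m1 | m1 <;>
          rcases Bool.dichotomy (M j l) with m2 | m2 <;>
          rcases Bool.dichotomy (N j k) with n1 | n1 <;>
          rcases Bool.dichotomy (N j l) with n2 | n2 <;>
            simp [m1, m2, n1, n2] at hfg ⊢
        rcases hcase with ⟨e1, e2, e3⟩ | ⟨e1, e2, e3⟩
        · -- swap on M
          have hij : i ≠ j := hji.symm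
          have hswap := isSwap_swapAt hij hkl h1 h3 e1 e2
          have hlt : (N i k).toNat + (N j l).toNat < (N i l).toNat + (N j k).toNat := by
            rcases Bool.dichotomy (N j k) with n1 | n1 <;>
            rcases Bool.dichotomy (N j l) with n2 | n2 <;>
              simp [h2, h4, n1, n2] at e3 ⊢
          have hdd := dd_swapAt_lt hij hkl h1 h3 e1 e2 hlt
          have hr' : ∀ r, rowSum (swapAt M i j k l) r = rowSum N r :=
            fun r => (rowSum_swapAt hij hkl h1 h3 e1 e2 r).trans (hr r)
          have hc' : ∀ c, colSum (swapAt M i j k l) c = colSum N c :=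
            fun c => (colSum_swapAt hij hkl h1 h3 e1 e2 c).trans (hc c)
          exact Relation.ReflTransGen.head hswap (ih _ _ (by omega) hr' hc')
        · -- swap on N
          have hswap := isSwap_swapAt hji hkl e1 e2 h2 h4
          have hlt : (M j k).toNat + (M i l).toNat < (M j l).toNat + (M i k).toNat := by
            rcases Bool.dichotomy (M j k) with m1 | m1 <;>
            rcases Bool.dichotomy (M j l) with m2 | m2 <;>
              simp [h1, h3, m1, m2] at e3 ⊢
          have hdd : dd M (swapAt N j i k l) < dd M N := by
            rw [dd_comm M (swapAt N j i k l), dd_comm M N]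
            exact dd_swapAt_lt hji hkl e1 e2 h2 h4 hlt
          have hr' : ∀ r, rowSum M r = rowSum (swapAt N j i k l) r :=
            fun r => (hr r).trans (rowSum_swapAt hji hkl e1 e2 h2 h4 r).symm
          have hc' : ∀ c, colSum M c = colSum (swapAt N j i k l) c :=
            fun c => (hc c).trans (colSum_swapAt hji hkl e1 e2 h2 h4 c).symm
          exact (ih _ _ (by omega) hr' hc').tail (isSwap_symm hswap)
  exact key (dd M N) M N le_rfl hrow hcol
end

section
/- Let M, N : Fin m → Fin n → Bool be presence–absence matrices with equal row sums and equal column sums. Then N can be obtained from M by a finite sequence of trades, i.e., (M, N) lies in the reflexive–transitive closure of the trade relation. -/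
/-- `N` is obtained from `M` by a trade between rows `i ≠ j`, exchanging a nonempty
set `A'` of columns exclusive to row `i` with an equally sized set `B'` of columns
exclusive to row `j`, flipping exactly those entries in rows `i` and `j`. -/
def IsTrade {m n : ℕ} (M N : Fin m → Fin n → Bool) (i j : Fin m)
    (A' B' : Finset (Fin n)) : Prop :=
  i ≠ j ∧ A'.Nonempty ∧ A'.card = B'.card ∧
  (∀ c ∈ A', M i c = true ∧ M j c = false) ∧
  (∀ c ∈ B', M j c = true ∧ M i c = false) ∧
  (∀ c, N i c = if c ∈ A' then false else if c ∈ B' then true else M i c) ∧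
  (∀ c, N j c = if c ∈ A' then true else if c ∈ B' then false else M j c) ∧
  (∀ r, r ≠ i → r ≠ j → ∀ c, N r c = M r c)

/-- The trade relation: `N` is obtained from `M` by some trade. -/
def TradeRel {m n : ℕ} (M N : Fin m → Fin n → Bool) : Prop :=
  ∃ (i j : Fin m) (A' B' : Finset (Fin n)), IsTrade M N i j A' B'

namespace TradeAux

variable {m n : ℕ}

/-- Flip a 2×2 interchange: entries (i1,c1),(i1,c2),(i2,c1),(i2,c2). -/
def flip (M : Fin m → Fin n → Bool) (i1 i2 : Fin m) (c1 c2 : Fin n) :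
    Fin m → Fin n → Bool :=
  fun r c =>
    if r = i1 then (if c = c1 then false else if c = c2 then true else M r c)
    else if r = i2 then (if c = c1 then true else if c = c2 then false else M r c)
    else M r c

lemma flip_apply_ne {M : Fin m → Fin n → Bool} {i1 i2 : Fin m} {c1 c2 : Fin n}
    {r : Fin m} {c : Fin n}
    (h1 : r = i1 → c ≠ c1 ∧ c ≠ c2) (h2 : r = i2 → c ≠ c1 ∧ c ≠ c2) :
    flip M i1 i2 c1 c2 r c = M r c := by
  unfold flip
  by_cases hr1 : r = i1
  · obtain ⟨e1, e2⟩ := h1 hr1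
    simp [hr1, e1, e2]
  · by_cases hr2 : r = i2
    · obtain ⟨e1, e2⟩ := h2 hr2
      simp [hr1, hr2, e1, e2]
    · simp [hr1, hr2]

lemma tradeRel_flip (M : Fin m → Fin n → Bool) {i1 i2 : Fin m} {c1 c2 : Fin n}
    (hij : i1 ≠ i2) (hcc : c1 ≠ c2)
    (h11 : M i1 c1 = true) (h12 : M i1 c2 = false)
    (h22 : M i2 c2 = true) (h21 : M i2 c1 = false) :
    TradeRel M (flip M i1 i2 c1 c2) := by
  refine ⟨i1, i2, {c1}, {c2}, hij, ⟨c1, Finset.mem_singleton_self c1⟩, by simp, ?_, ?_, ?_, ?_, ?_⟩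
  · intro c hc; rw [Finset.mem_singleton] at hc; subst hc; exact ⟨h11, h21⟩
  · intro c hc; rw [Finset.mem_singleton] at hc; subst hc; exact ⟨h22, h12⟩
  · intro c; simp [flip, Finset.mem_singleton]
  · intro c; simp [flip, Finset.mem_singleton, Ne.symm hij]
  · intro r hr1 hr2 c; simp only [flip, if_neg hr1, if_neg hr2]

/-- weighted disagreement count -/
def diffW (M N : Fin m → Fin n → Bool) : ℕ :=
  ∑ p : Fin m × Fin n, if M p.1 p.2 = N p.1 p.2 then 0 else 1

lemma eq_of_diffW_eq_zero {M N : Fin m → Fin n → Bool} (h : diffW M N = 0) : M = N := by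
  funext i c
  rw [diffW, Finset.sum_eq_zero_iff] at h
  have := h (i, c) (Finset.mem_univ _)
  by_contra hne
  rw [if_neg hne] at this
  exact one_ne_zero this

lemma diffW_split {M' M N : Fin m → Fin n → Bool} (T : Finset (Fin m × Fin n)) (e : ℕ)
    (hoff : ∀ p ∉ T, M' p.1 p.2 = M p.1 p.2)
    (hT : (∑ p ∈ T, (if M' p.1 p.2 = N p.1 p.2 then 0 else 1)) + e ≤
          ∑ p ∈ T, (if M p.1 p.2 = N p.1 p.2 then 0 else 1)) :
    diffW M' N + e ≤ diffW M N := by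
  unfold diffW
  rw [← Finset.sum_add_sum_compl T (fun p => if M' p.1 p.2 = N p.1 p.2 then (0:ℕ) else 1),
      ← Finset.sum_add_sum_compl T (fun p => if M p.1 p.2 = N p.1 p.2 then (0:ℕ) else 1)]
  have hc : (∑ p ∈ Tᶜ, (if M' p.1 p.2 = N p.1 p.2 then (0:ℕ) else 1)) =
      ∑ p ∈ Tᶜ, (if M p.1 p.2 = N p.1 p.2 then (0:ℕ) else 1) := by
    refine Finset.sum_congr rfl fun p hp => ?_
    rw [hoff p (by simpa using hp)]
  omega


section flipdiff
variable {M N : Fin m → Fin n → Bool} {i1 i2 : Fin m} {c1 c2 : Fin n}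

lemma diffW_flip_aux (hij : i1 ≠ i2) (hcc : c1 ≠ c2)
    (h11 : M i1 c1 = true) (h12 : M i1 c2 = false)
    (h22 : M i2 c2 = true) (h21 : M i2 c1 = false)
    (n12 : N i1 c2 = true) (n22 : N i2 c2 = false) (e : ℕ)
    (he : e = if N i1 c1 = false then 2 else 0) :
    diffW (flip M i1 i2 c1 c2) N + e ≤ diffW M N := by
  classical
  have d1 : ((i1,c1) : Fin m × Fin n) ∉ ({(i1,c2),(i2,c2),(i2,c1)} : Finset (Fin m × Fin n)) := by
    simp [Prod.ext_iff, hij, hcc]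
  have d2 : ((i1,c2) : Fin m × Fin n) ∉ ({(i2,c2),(i2,c1)} : Finset (Fin m × Fin n)) := by
    simp [Prod.ext_iff, hij, hcc]
  have d3 : ((i2,c2) : Fin m × Fin n) ∉ ({(i2,c1)} : Finset (Fin m × Fin n)) := by
    simp [Prod.ext_iff, Ne.symm hcc, hcc]
  refine diffW_split ({(i1,c1),(i1,c2),(i2,c2),(i2,c1)} : Finset (Fin m × Fin n)) e ?_ ?_
  · intro p hp
    simp only [Finset.mem_insert, Finset.mem_singleton] at hp
    push_neg at hp
    obtain ⟨e1, e2, e3, e4⟩ := hp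
    refine flip_apply_ne ?_ ?_
    · intro hr
      constructor
      · intro hc; exact e1 (Prod.ext hr hc)
      · intro hc; exact e2 (Prod.ext hr hc)
    · intro hr
      constructor
      · intro hc; exact e4 (Prod.ext hr hc)
      · intro hc; exact e3 (Prod.ext hr hc)
  · rw [Finset.sum_insert d1, Finset.sum_insert d2, Finset.sum_insert d3, Finset.sum_singleton]
    rw [Finset.sum_insert d1, Finset.sum_insert d2, Finset.sum_insert d3, Finset.sum_singleton]
    have f11 : flip M i1 i2 c1 c2 i1 c1 = false := by simp [flip]
    have f12 : flip M i1 i2 c1 c2 i1 c2 = true := by simp [flip, Ne.symm hcc]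
    have f22 : flip M i1 i2 c1 c2 i2 c2 = false := by simp [flip, Ne.symm hij, Ne.symm hcc]
    have f21 : flip M i1 i2 c1 c2 i2 c1 = true := by simp [flip, Ne.symm hij]
    rw [f11, f12, f22, f21, h11, h12, h22, h21, n12, n22]
    cases hx : N i2 c1 <;> cases hy : N i1 c1 <;> simp [hy] at he ⊢ <;> omega

lemma diffW_flip_lt (hij : i1 ≠ i2) (hcc : c1 ≠ c2)
    (h11 : M i1 c1 = true) (h12 : M i1 c2 = false)
    (h22 : M i2 c2 = true) (h21 : M i2 c1 = false)
    (n11 : N i1 c1 = false) (n12 : N i1 c2 = true) (n22 : N i2 c2 = false) :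
    diffW (flip M i1 i2 c1 c2) N < diffW M N := by
  have := diffW_flip_aux hij hcc h11 h12 h22 h21 n12 n22 2 (by rw [if_pos n11])
  omega

lemma diffW_flip_le (hij : i1 ≠ i2) (hcc : c1 ≠ c2)
    (h11 : M i1 c1 = true) (h12 : M i1 c2 = false)
    (h22 : M i2 c2 = true) (h21 : M i2 c1 = false)
    (n12 : N i1 c2 = true) (n22 : N i2 c2 = false) :
    diffW (flip M i1 i2 c1 c2) N ≤ diffW M N := by
  have := diffW_flip_aux hij hcc h11 h12 h22 h21 n12 n22
    (if N i1 c1 = false then 2 else 0) rfl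
  omega

end flipdiff


section sums
variable {M N : Fin m → Fin n → Bool}

lemma tradeRel_rowSum (h : TradeRel M N) (i0 : Fin m) : rowSum N i0 = rowSum M i0 := by
  classical
  obtain ⟨i, j, A', B', hij, hA, hcard, hMA, hMB, hNi, hNj, hNr⟩ := h
  have disjA : ∀ c ∈ A', c ∉ B' := by
    intro c hc hcb
    exact absurd (hMA c hc).1 (by rw [(hMB c hcb).2]; simp)
  by_cases h1 : i0 = i
  · subst h1
    have hset : (Finset.univ.filter fun c => N i0 c = true) =
        ((Finset.univ.filter fun c => M i0 c = true) \ A') ∪ B' := by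
      ext c
      simp only [Finset.mem_filter, Finset.mem_univ, true_and, Finset.mem_union,
        Finset.mem_sdiff, hNi c]
      by_cases hA' : c ∈ A'
      · simp only [if_pos hA']
        constructor
        · intro hf; exact absurd hf (by simp)
        · rintro (⟨_, hc⟩ | hc)
          · exact absurd hA' hc
          · exact absurd hc (disjA c hA')
      · by_cases hB : c ∈ B'
        · simp [hA', hB, (hMB c hB).1]
        · simp [hA', hB]
    have hsub : A' ⊆ Finset.univ.filter fun c => M i0 c = true := by
      intro c hc; exact Finset.mem_filter.2 ⟨Finset.mem_univ _, (hMA c hc).1⟩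
    have hdisj : Disjoint ((Finset.univ.filter fun c => M i0 c = true) \ A') B' := by
      rw [Finset.disjoint_left]
      intro c hc hcb
      rw [Finset.mem_sdiff, Finset.mem_filter] at hc
      exact absurd hc.1.2 (by rw [(hMB c hcb).2]; simp)
    have hle := Finset.card_le_card hsub
    rw [rowSum, rowSum, hset, Finset.card_union_of_disjoint hdisj, Finset.card_sdiff_of_subset hsub]
    omega
  · by_cases h2 : i0 = j
    · subst h2
      have disjB : ∀ c ∈ B', c ∉ A' := fun c hc hca => disjA c hca hc
      have hset : (Finset.univ.filter fun c => N i0 c = true) =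
          ((Finset.univ.filter fun c => M i0 c = true) \ B') ∪ A' := by
        ext c
        simp only [Finset.mem_filter, Finset.mem_univ, true_and, Finset.mem_union,
          Finset.mem_sdiff, hNj c]
        by_cases hA' : c ∈ A'
        · simp [hA']
        · by_cases hB : c ∈ B'
          · simp only [if_neg hA', if_pos hB]
            constructor
            · intro hf; exact absurd hf (by simp)
            · rintro (⟨_, hc⟩ | hc)
              · exact absurd hB hc
              · exact absurd hc hA'
          · simp [hA', hB]
      have hsub : B' ⊆ Finset.univ.filter fun c => M i0 c = true := by
        intro c hc; exact Finset.mem_filter.2 ⟨Finset.mem_univ _, (hMB c hc).1⟩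
      have hdisj : Disjoint ((Finset.univ.filter fun c => M i0 c = true) \ B') A' := by
        rw [Finset.disjoint_left]
        intro c hc hca
        rw [Finset.mem_sdiff, Finset.mem_filter] at hc
        exact absurd hc.1.2 (by rw [(hMA c hca).2]; simp)
      have hle := Finset.card_le_card hsub
      rw [rowSum, rowSum, hset, Finset.card_union_of_disjoint hdisj, Finset.card_sdiff_of_subset hsub]
      omega
    · rw [rowSum, rowSum]
      congr 1
      apply Finset.filter_congr
      intro c _
      rw [hNr i0 h1 h2 c]

lemma tradeRel_colSum (h : TradeRel M N) (c0 : Fin n) : colSum N c0 = colSum M c0 := by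
  classical
  obtain ⟨i, j, A', B', hij, hA, hcard, hMA, hMB, hNi, hNj, hNr⟩ := h
  by_cases hA' : c0 ∈ A'
  · have hMi : M i c0 = true := (hMA c0 hA').1
    have hMj : M j c0 = false := (hMA c0 hA').2
    have hB' : c0 ∉ B' := by
      intro hb; exact absurd (hMB c0 hb).1 (by rw [hMj]; simp)
    have hset : (Finset.univ.filter fun r => N r c0 = true) =
        insert j ((Finset.univ.filter fun r => M r c0 = true).erase i) := by
      ext r
      simp only [Finset.mem_filter, Finset.mem_univ, true_and, Finset.mem_insert,
        Finset.mem_erase]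
      by_cases hr1 : r = i
      · subst hr1
        rw [hNi c0, if_pos hA']
        simp [hij]
      · by_cases hr2 : r = j
        · subst hr2
          rw [hNj c0, if_pos hA']
          simp
        · rw [hNr r hr1 hr2 c0]
          simp [hr2, hr1]
    have hjmem : j ∉ (Finset.univ.filter fun r => M r c0 = true).erase i := by
      rw [Finset.mem_erase, Finset.mem_filter]
      rintro ⟨-, -, hm⟩
      rw [hMj] at hm; exact absurd hm (by simp)
    have himem : i ∈ Finset.univ.filter fun r => M r c0 = true :=
      Finset.mem_filter.2 ⟨Finset.mem_univ _, hMi⟩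
    rw [colSum, colSum, hset, Finset.card_insert_of_notMem hjmem,
      Finset.card_erase_of_mem himem]
    have := Finset.card_pos.2 ⟨i, himem⟩
    omega
  · by_cases hB' : c0 ∈ B'
    · have hMj : M j c0 = true := (hMB c0 hB').1
      have hMi : M i c0 = false := (hMB c0 hB').2
      have hset : (Finset.univ.filter fun r => N r c0 = true) =
          insert i ((Finset.univ.filter fun r => M r c0 = true).erase j) := by
        ext r
        simp only [Finset.mem_filter, Finset.mem_univ, true_and, Finset.mem_insert,
          Finset.mem_erase]
        by_cases hr1 : r = i
        · subst hr1
          rw [hNi c0, if_neg hA', if_pos hB']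
          simp
        · by_cases hr2 : r = j
          · subst hr2
            rw [hNj c0, if_neg hA', if_pos hB']
            simp [Ne.symm hij, hr1]
          · rw [hNr r hr1 hr2 c0]
            simp [hr2, hr1]
      have himem : i ∉ (Finset.univ.filter fun r => M r c0 = true).erase j := by
        rw [Finset.mem_erase, Finset.mem_filter]
        rintro ⟨-, -, hm⟩
        rw [hMi] at hm; exact absurd hm (by simp)
      have hjmem : j ∈ Finset.univ.filter fun r => M r c0 = true :=
        Finset.mem_filter.2 ⟨Finset.mem_univ _, hMj⟩
      rw [colSum, colSum, hset, Finset.card_insert_of_notMem himem,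
        Finset.card_erase_of_mem hjmem]
      have := Finset.card_pos.2 ⟨j, hjmem⟩
      omega
    · rw [colSum, colSum]
      congr 1
      apply Finset.filter_congr
      intro r _
      by_cases hr1 : r = i
      · subst hr1; rw [hNi c0, if_neg hA', if_neg hB']
      · by_cases hr2 : r = j
        · subst hr2; rw [hNj c0, if_neg hA', if_neg hB']
        · rw [hNr r hr1 hr2 c0]

lemma rtg_rowSum {M M' : Fin m → Fin n → Bool}
    (h : Relation.ReflTransGen TradeRel M M') (i : Fin m) : rowSum M' i = rowSum M i := by
  induction h with
  | refl => rfl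
  | tail _ hstep ih => exact (tradeRel_rowSum hstep i).trans ih

lemma rtg_colSum {M M' : Fin m → Fin n → Bool}
    (h : Relation.ReflTransGen TradeRel M M') (c : Fin n) : colSum M' c = colSum M c := by
  induction h with
  | refl => rfl
  | tail _ hstep ih => exact (tradeRel_colSum hstep c).trans ih

end sums


section cycles
variable {M N : Fin m → Fin n → Bool}

/-- An alternating cycle: rows `R 0,…,R (k-1)` and columns `C 0,…,C (k-1)`,
with `M=1,N=0` on diagonal cells `(R s, C s)` and `M=0,N=1` on off cells
`(R s, C ((s+1)%k))`. -/
def IsCycle (M N : Fin m → Fin n → Bool) (k : ℕ) (R : ℕ → Fin m) (C : ℕ → Fin n) : Prop :=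
  2 ≤ k ∧
  (∀ s < k, ∀ t < k, R s = R t → s = t) ∧
  (∀ s < k, ∀ t < k, C s = C t → s = t) ∧
  (∀ s < k, M (R s) (C s) = true ∧ N (R s) (C s) = false) ∧
  (∀ s < k, M (R s) (C ((s+1) % k)) = false ∧ N (R s) (C ((s+1) % k)) = true)

lemma mod_cancel {k s t t0 : ℕ} (hs : s < k) (ht : t < k)
    (h : (s + t0) % k = (t + t0) % k) : s = t := by
  have h2 : s % k = t % k := Nat.ModEq.add_right_cancel' t0 h
  rwa [Nat.mod_eq_of_lt hs, Nat.mod_eq_of_lt ht] at h2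

lemma IsCycle.rotate {k : ℕ} {R : ℕ → Fin m} {C : ℕ → Fin n}
    (h : IsCycle M N k R C) (t0 : ℕ) (ht0 : t0 < k) :
    IsCycle M N k (fun s => R ((s + t0) % k)) (fun s => C ((s + t0) % k)) := by
  obtain ⟨hk, hR, hC, hd, ho⟩ := h
  have hkpos : 0 < k := by omega
  refine ⟨hk, ?_, ?_, ?_, ?_⟩
  · intro s hs t ht he
    exact mod_cancel hs ht (hR _ (Nat.mod_lt _ hkpos) _ (Nat.mod_lt _ hkpos) he)
  · intro s hs t ht he
    exact mod_cancel hs ht (hC _ (Nat.mod_lt _ hkpos) _ (Nat.mod_lt _ hkpos) he)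
  · intro s hs
    exact hd _ (Nat.mod_lt _ hkpos)
  · intro s hs
    have e : ((s + 1) % k + t0) % k = ((s + t0) % k + 1) % k := by
      rw [Nat.mod_add_mod, Nat.mod_add_mod, Nat.add_right_comm]
    rw [show (fun s => C ((s + t0) % k)) ((s+1) % k) = C (((s + t0) % k + 1) % k) from by
      simp only []; rw [e]]
    exact ho _ (Nat.mod_lt _ hkpos)

end cycles


lemma cycle_step (N : Fin m → Fin n → Bool) :
    ∀ k, ∀ (M : Fin m → Fin n → Bool) (R : ℕ → Fin m) (C : ℕ → Fin n),
      IsCycle M N k R C →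
      ∃ M', Relation.ReflTransGen TradeRel M M' ∧ diffW M' N < diffW M N := by
  intro k
  induction k using Nat.strong_induction_on with
  | _ k IH =>
  intro M R C hcyc
  classical
  obtain ⟨hk, hRinj0, hCinj0, hdiag0, hoff0⟩ := hcyc
  have hcyc : IsCycle M N k R C := ⟨hk, hRinj0, hCinj0, hdiag0, hoff0⟩
  have hkpos : 0 < k := by omega
  set P : ℕ → Prop := fun l => 1 ≤ l ∧ ∃ t, t < k ∧
    ¬(M (R ((t + l) % k)) (C t) = true ∧ N (R ((t + l) % k)) (C t) = true) with hPdef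
  have hPex : P (k - 1) := by
    refine ⟨by omega, 0, hkpos, ?_⟩
    have h0 := hoff0 (k-1) (by omega)
    have e1 : (k - 1 + 1) % k = 0 := by
      rw [show k - 1 + 1 = k from by omega, Nat.mod_self]
    rw [e1] at h0
    have e2 : (0 + (k-1)) % k = k - 1 := by
      rw [Nat.zero_add, Nat.mod_eq_of_lt (by omega)]
    rw [e2]
    intro hcon
    rw [h0.1] at hcon
    simpa using hcon.1
  have hex : ∃ l, P l := ⟨k - 1, hPex⟩
  have hspec := Nat.find_spec hex
  have hfle : Nat.find hex ≤ k - 1 := Nat.find_le hPex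
  obtain ⟨hl1, t0, ht0, hbad⟩ := hspec
  set l0 := Nat.find hex with hl0def
  have hlk : l0 < k := by omega
  have hpack : ∃ (R' : ℕ → Fin m) (C' : ℕ → Fin n), IsCycle M N k R' C' ∧
      ¬(M (R' l0) (C' 0) = true ∧ N (R' l0) (C' 0) = true) ∧
      (2 ≤ l0 → M (R' (l0-1)) (C' 0) = true ∧ N (R' (l0-1)) (C' 0) = true) := by
    refine ⟨fun s => R ((s + t0) % k), fun s => C ((s + t0) % k),
      hcyc.rotate t0 ht0, ?_, ?_⟩
    · have e1 : (l0 + t0) % k = (t0 + l0) % k := by rw [Nat.add_comm]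
      have e2 : (0 + t0) % k = t0 := by rw [Nat.zero_add, Nat.mod_eq_of_lt ht0]
      simp only [e1, e2]
      exact hbad
    · intro hl2
      have hnP : ¬ P (l0 - 1) := Nat.find_min hex (by omega)
      have hlev : M (R ((t0 + (l0-1)) % k)) (C t0) = true ∧
          N (R ((t0 + (l0-1)) % k)) (C t0) = true := by
        by_contra hcon
        exact hnP ⟨by omega, t0, ht0, hcon⟩
      have e1 : (l0 - 1 + t0) % k = (t0 + (l0-1)) % k := by rw [Nat.add_comm]
      have e2 : (0 + t0) % k = t0 := by rw [Nat.zero_add, Nat.mod_eq_of_lt ht0]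
      simp only [e1, e2]
      exact hlev
  clear hbad hcyc hRinj0 hCinj0 hdiag0 hoff0
  obtain ⟨R', C', hcyc', hbad, hlev⟩ := hpack
  obtain ⟨-, hRinj, hCinj, hdiag, hoff⟩ := hcyc'
  cases hMv : M (R' l0) (C' 0) with
  | true =>
    -- Case B : shorter cycle in the same M
    have hN : N (R' l0) (C' 0) = false := by
      cases hNv : N (R' l0) (C' 0)
      · rfl
      · exact absurd ⟨hMv, hNv⟩ hbad
    have hllt : l0 < k - 1 := by
      rcases Nat.lt_or_ge l0 (k-1) with h | h
      · exact h
      · exfalso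
        have hleq : l0 = k - 1 := by omega
        have h0 := hoff (k-1) (by omega)
        have e1 : (k - 1 + 1) % k = 0 := by
          rw [show k - 1 + 1 = k from by omega, Nat.mod_self]
        rw [e1] at h0
        rw [hleq] at hMv
        rw [h0.1] at hMv
        simpa using hMv
    have hk'2 : 2 ≤ k - l0 := by omega
    have hk'lt : k - l0 < k := by omega
    refine IH (k - l0) hk'lt M (fun s => R' (l0 + s))
      (fun s => if s = 0 then C' 0 else C' (l0 + s)) ⟨hk'2, ?_, ?_, ?_, ?_⟩
    · intro s hs t ht he
      have := hRinj (l0 + s) (by omega) (l0 + t) (by omega) he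
      omega
    · intro s hs t ht he
      dsimp only at he
      by_cases hs0 : s = 0 <;> by_cases ht0' : t = 0
      · omega
      · rw [if_pos hs0, if_neg ht0'] at he
        have := hCinj 0 hkpos (l0 + t) (by omega) he
        omega
      · rw [if_neg hs0, if_pos ht0'] at he
        have := hCinj (l0 + s) (by omega) 0 hkpos he
        omega
      · rw [if_neg hs0, if_neg ht0'] at he
        have := hCinj (l0 + s) (by omega) (l0 + t) (by omega) he
        omega
    · intro s hs
      dsimp only
      by_cases hs0 : s = 0
      · rw [if_pos hs0, hs0, Nat.add_zero]
        exact ⟨hMv, hN⟩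
      · rw [if_neg hs0]
        exact hdiag (l0 + s) (by omega)
    · intro s hs
      dsimp only
      by_cases hsl : s + 1 < k - l0
      · rw [Nat.mod_eq_of_lt hsl, if_neg (by omega : ¬ s + 1 = 0)]
        have h0 := hoff (l0 + s) (by omega)
        rw [Nat.mod_eq_of_lt (by omega : l0 + s + 1 < k)] at h0
        rw [show l0 + (s + 1) = l0 + s + 1 from by omega]
        exact h0
      · have hseq : s = k - l0 - 1 := by omega
        have e : (s + 1) % (k - l0) = 0 := by
          rw [hseq, show k - l0 - 1 + 1 = k - l0 from by omega, Nat.mod_self]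
        rw [e, if_pos rfl]
        have h0 := hoff (k-1) (by omega)
        have e1 : (k - 1 + 1) % k = 0 := by
          rw [show k - 1 + 1 = k from by omega, Nat.mod_self]
        rw [e1] at h0
        rw [show l0 + s = k - 1 from by omega]
        exact h0
  | false =>
    -- Case A : an interchange
    by_cases hl1' : l0 = 1
    · -- direct win
      have hd0 := hdiag 0 hkpos
      have hd1 := hdiag 1 (by omega)
      have ho0 := hoff 0 hkpos
      rw [Nat.zero_add, Nat.mod_eq_of_lt (by omega : 1 < k)] at ho0
      have hij : R' 0 ≠ R' 1 := fun he => by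
        have := hRinj 0 hkpos 1 (by omega) he; omega
      have hcc : C' 0 ≠ C' 1 := fun he => by
        have := hCinj 0 hkpos 1 (by omega) he; omega
      rw [hl1'] at hMv
      exact ⟨flip M (R' 0) (R' 1) (C' 0) (C' 1),
        Relation.ReflTransGen.single (tradeRel_flip M hij hcc hd0.1 ho0.1 hd1.1 hMv),
        diffW_flip_lt hij hcc hd0.1 ho0.1 hd1.1 hMv hd0.2 ho0.2 hd1.2⟩
    · -- l0 ≥ 2 : neutral interchange then shorter cycle
      have hl2 : 2 ≤ l0 := by omega
      have hlev' := hlev hl2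
      have hij : R' (l0-1) ≠ R' l0 := fun he => by
        have := hRinj (l0-1) (by omega) l0 hlk he; omega
      have hcc : C' 0 ≠ C' l0 := fun he => by
        have := hCinj 0 hkpos l0 hlk he; omega
      have ho1 := hoff (l0-1) (by omega)
      rw [show l0 - 1 + 1 = l0 from by omega, Nat.mod_eq_of_lt hlk] at ho1
      have hdl := hdiag l0 hlk
      have hstep : TradeRel M (flip M (R' (l0-1)) (R' l0) (C' 0) (C' l0)) :=
        tradeRel_flip M hij hcc hlev'.1 ho1.1 hdl.1 hMv
      have hle2 : diffW (flip M (R' (l0-1)) (R' l0) (C' 0) (C' l0)) N ≤ diffW M N :=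
        diffW_flip_le hij hcc hlev'.1 ho1.1 hdl.1 hMv ho1.2 hdl.2
      have hnew : IsCycle (flip M (R' (l0-1)) (R' l0) (C' 0) (C' l0)) N l0 R' C' := by
        refine ⟨hl2, ?_, ?_, ?_, ?_⟩
        · intro s hs t ht he; exact hRinj s (by omega) t (by omega) he
        · intro s hs t ht he; exact hCinj s (by omega) t (by omega) he
        · intro s hs
          have hsk : s < k := by omega
          have hne : flip M (R' (l0-1)) (R' l0) (C' 0) (C' l0) (R' s) (C' s)
              = M (R' s) (C' s) := by
            apply flip_apply_ne
            · intro hr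
              have hseq : s = l0 - 1 := hRinj s hsk (l0-1) (by omega) hr
              constructor
              · intro hc; have := hCinj s hsk 0 hkpos hc; omega
              · intro hc; have := hCinj s hsk l0 hlk hc; omega
            · intro hr
              have := hRinj s hsk l0 hlk hr; omega
          rw [hne]
          exact hdiag s hsk
        · intro s hs
          by_cases hsl : s + 1 < l0
          · rw [Nat.mod_eq_of_lt hsl]
            have hne : flip M (R' (l0-1)) (R' l0) (C' 0) (C' l0) (R' s) (C' (s+1))
                = M (R' s) (C' (s+1)) := by
              apply flip_apply_ne
              · intro hr
                have := hRinj s (by omega) (l0-1) (by omega) hr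
                omega
              · intro hr
                have := hRinj s (by omega) l0 hlk hr
                omega
            rw [hne]
            have h0 := hoff s (by omega)
            rw [Nat.mod_eq_of_lt (by omega : s + 1 < k)] at h0
            exact h0
          · have hseq : s = l0 - 1 := by omega
            have e : (s + 1) % l0 = 0 := by
              rw [hseq, show l0 - 1 + 1 = l0 from by omega, Nat.mod_self]
            rw [e, hseq]
            constructor
            · show flip M (R' (l0-1)) (R' l0) (C' 0) (C' l0) (R' (l0-1)) (C' 0) = false
              simp [flip]
            · exact hlev'.2
      obtain ⟨M', hM'1, hM'2⟩ := IH l0 (by omega) (flip M (R' (l0-1)) (R' l0) (C' 0) (C' l0)) R' C' hnew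
      exact ⟨M', Relation.ReflTransGen.head hstep hM'1, by omega⟩


lemma balance {α : Type*} [Fintype α] [DecidableEq α] {f g : α → Bool}
    (h : (Finset.univ.filter fun a => f a = true).card =
         (Finset.univ.filter fun a => g a = true).card)
    {a : α} (hf : f a = false) (hg : g a = true) : ∃ b, f b = true ∧ g b = false := by
  by_contra hb
  push_neg at hb
  have hsub : (Finset.univ.filter fun a => f a = true) ⊆
      (Finset.univ.filter fun a => g a = true) := by
    intro b hbm
    rw [Finset.mem_filter] at hbm ⊢
    refine ⟨Finset.mem_univ _, ?_⟩
    have := hb b hbm.2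
    cases hgb : g b
    · exact absurd hgb this
    · rfl
  have heq := Finset.eq_of_subset_of_card_le hsub (le_of_eq h.symm)
  have hmem : a ∈ Finset.univ.filter fun a => g a = true :=
    Finset.mem_filter.2 ⟨Finset.mem_univ _, hg⟩
  rw [← heq, Finset.mem_filter] at hmem
  rw [hf] at hmem
  simpa using hmem.2

/-- An alternating path. -/
def IsPath (M N : Fin m → Fin n → Bool) (j : ℕ) (R : ℕ → Fin m) (C : ℕ → Fin n) : Prop :=
  1 ≤ j ∧
  (∀ s < j, ∀ t < j, R s = R t → s = t) ∧
  (∀ s < j, ∀ t < j, C s = C t → s = t) ∧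
  (∀ s < j, M (R s) (C s) = true ∧ N (R s) (C s) = false) ∧
  (∀ s, s + 1 < j → M (R s) (C (s+1)) = false ∧ N (R s) (C (s+1)) = true)

variable {M N : Fin m → Fin n → Bool}

lemma grow (hrow : ∀ i, rowSum M i = rowSum N i) (hcol : ∀ c, colSum M c = colSum N c)
    {j : ℕ} {R : ℕ → Fin m} {C : ℕ → Fin n} (hp : IsPath M N j R C) :
    (∃ k R' C', IsCycle M N k R' C') ∨ (∃ R' C', IsPath M N (j+1) R' C') := by
  classical
  obtain ⟨hj, hR, hC, hd, ho⟩ := hp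
  have hjlt : j - 1 < j := by omega
  have hdl := hd (j-1) hjlt
  -- find a (0,1) cell in row R (j-1)
  obtain ⟨c', hc'N, hc'M⟩ :=
    balance (f := fun c => N (R (j-1)) c) (g := fun c => M (R (j-1)) c)
      ((hrow (R (j-1))).symm) hdl.2 hdl.1
  by_cases hcold : ∃ s, s < j ∧ C s = c'
  · -- close a cycle using an old column
    obtain ⟨s, hs, hCs⟩ := hcold
    have hsne : s ≠ j - 1 := by
      intro he
      rw [he] at hCs
      rw [hCs] at hdl
      rw [hdl.1] at hc'M
      simpa using hc'M
    have hslt : s < j - 1 := by omega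
    refine Or.inl ⟨j - s, fun a => R (s + a), fun a => C (s + a), by omega, ?_, ?_, ?_, ?_⟩
    · intro a ha b hb he
      have := hR (s+a) (by omega) (s+b) (by omega) he
      omega
    · intro a ha b hb he
      have := hC (s+a) (by omega) (s+b) (by omega) he
      omega
    · intro a ha
      exact hd (s+a) (by omega)
    · intro a ha
      dsimp only
      by_cases hal : a + 1 < j - s
      · rw [Nat.mod_eq_of_lt hal]
        have h0 := ho (s+a) (by omega)
        rw [show s + (a+1) = s + a + 1 from by omega]
        exact h0
      · have haeq : a = j - s - 1 := by omega
        have e : (a + 1) % (j - s) = 0 := by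
          rw [haeq, show j - s - 1 + 1 = j - s from by omega, Nat.mod_self]
        rw [e, Nat.add_zero, haeq, show s + (j - s - 1) = j - 1 from by omega, hCs]
        exact ⟨hc'M, hc'N⟩
  · push_neg at hcold
    -- find a (1,0) cell in column c'
    obtain ⟨i', hi'M, hi'N⟩ :=
      balance (f := fun r => M r c') (g := fun r => N r c') (hcol c') hc'M hc'N
    by_cases hrold : ∃ s, s < j ∧ R s = i'
    · -- close a cycle using an old row
      obtain ⟨s, hs, hRs⟩ := hrold
      have hsne : s ≠ j - 1 := by
        intro he
        rw [he] at hRs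
        rw [hRs] at hc'M
        rw [hi'M] at hc'M
        simpa using hc'M
      have hslt : s < j - 1 := by omega
      refine Or.inl ⟨j - s, fun a => R (s + a),
        fun a => if a = 0 then c' else C (s + a), by omega, ?_, ?_, ?_, ?_⟩
      · intro a ha b hb he
        have := hR (s+a) (by omega) (s+b) (by omega) he
        omega
      · intro a ha b hb he
        dsimp only at he
        by_cases ha0 : a = 0 <;> by_cases hb0 : b = 0
        · omega
        · rw [if_pos ha0, if_neg hb0] at he
          exact absurd he.symm (hcold (s+b) (by omega))
        · rw [if_neg ha0, if_pos hb0] at he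
          exact absurd he (hcold (s+a) (by omega))
        · rw [if_neg ha0, if_neg hb0] at he
          have := hC (s+a) (by omega) (s+b) (by omega) he
          omega
      · intro a ha
        dsimp only
        by_cases ha0 : a = 0
        · rw [if_pos ha0, ha0, Nat.add_zero, hRs]
          exact ⟨hi'M, hi'N⟩
        · rw [if_neg ha0]
          exact hd (s+a) (by omega)
      · intro a ha
        dsimp only
        by_cases hal : a + 1 < j - s
        · rw [Nat.mod_eq_of_lt hal, if_neg (by omega : ¬ a + 1 = 0)]
          have h0 := ho (s+a) (by omega)
          rw [show s + (a+1) = s + a + 1 from by omega]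
          exact h0
        · have haeq : a = j - s - 1 := by omega
          have e : (a + 1) % (j - s) = 0 := by
            rw [haeq, show j - s - 1 + 1 = j - s from by omega, Nat.mod_self]
          rw [e, if_pos rfl, haeq, show s + (j - s - 1) = j - 1 from by omega]
          exact ⟨hc'M, hc'N⟩
    · -- extend the path
      push_neg at hrold
      refine Or.inr ⟨fun s => if s = j then i' else R s,
        fun s => if s = j then c' else C s, by omega, ?_, ?_, ?_, ?_⟩
      · intro s hs t ht he
        dsimp only at he
        by_cases hs0 : s = j <;> by_cases ht0 : t = j
        · omega
        · rw [if_pos hs0, if_neg ht0] at he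
          exact absurd he.symm (hrold t (by omega))
        · rw [if_neg hs0, if_pos ht0] at he
          exact absurd he (hrold s (by omega))
        · rw [if_neg hs0, if_neg ht0] at he
          exact hR s (by omega) t (by omega) he
      · intro s hs t ht he
        dsimp only at he
        by_cases hs0 : s = j <;> by_cases ht0 : t = j
        · omega
        · rw [if_pos hs0, if_neg ht0] at he
          exact absurd he.symm (hcold t (by omega))
        · rw [if_neg hs0, if_pos ht0] at he
          exact absurd he (hcold s (by omega))
        · rw [if_neg hs0, if_neg ht0] at he
          exact hC s (by omega) t (by omega) he
      · intro s hs
        dsimp only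
        by_cases hs0 : s = j
        · rw [if_pos hs0, if_pos hs0]
          exact ⟨hi'M, hi'N⟩
        · rw [if_neg hs0, if_neg hs0]
          exact hd s (by omega)
      · intro s hs
        dsimp only
        have hsj : ¬ s = j := by omega
        rw [if_neg hsj]
        by_cases hs1 : s + 1 = j
        · rw [if_pos hs1, show s = j - 1 from by omega]
          exact ⟨hc'M, hc'N⟩
        · rw [if_neg hs1]
          exact ho s (by omega)

lemma exists_cycle (hrow : ∀ i, rowSum M i = rowSum N i)
    (hcol : ∀ c, colSum M c = colSum N c) (hne : diffW M N ≠ 0) :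
    ∃ k R C, IsCycle M N k R C := by
  classical
  by_contra hnc
  have hpath : ∀ j, 1 ≤ j → ∃ R C, IsPath M N j R C := by
    intro j hj
    induction j with
    | zero => omega
    | succ j ihj =>
      rcases Nat.lt_or_ge j 1 with hj0 | hj1
      · -- base : j = 0, construct a path of length 1
        have : ∃ p : Fin m × Fin n, ¬ (M p.1 p.2 = N p.1 p.2) := by
          by_contra hall
          push_neg at hall
          apply hne
          rw [diffW]
          exact Finset.sum_eq_zero fun p _ => if_pos (hall p)
        obtain ⟨⟨i, c⟩, hic⟩ := this
        have hcell : ∃ i0 c0, M i0 c0 = true ∧ N i0 c0 = false := by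
          cases hMic : M i c
          · have hNic : N i c = true := by
              cases hNv : N i c
              · rw [hMic, hNv] at hic; simp at hic
              · rfl
            obtain ⟨c0, h1, h2⟩ :=
              balance (f := fun c => M i c) (g := fun c => N i c) (hrow i) hMic hNic
            exact ⟨i, c0, h1, h2⟩
          · have hNic : N i c = false := by
              cases hNv : N i c
              · rfl
              · rw [hMic, hNv] at hic; simp at hic
            exact ⟨i, c, hMic, hNic⟩
        obtain ⟨i0, c0, h1, h2⟩ := hcell
        refine ⟨fun _ => i0, fun _ => c0, by omega, ?_, ?_, ?_, ?_⟩
        · intro s hs t ht _; omega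
        · intro s hs t ht _; omega
        · intro s hs
          exact ⟨h1, h2⟩
        · intro s hs; omega
      · obtain ⟨R, C, hp⟩ := ihj hj1
        rcases grow hrow hcol hp with hcyc | hlong
        · exact absurd hcyc hnc
        · exact hlong
  obtain ⟨R, C, hp⟩ := hpath (m+1) (by omega)
  obtain ⟨-, hR, -, -, -⟩ := hp
  -- pigeonhole : m+1 distinct rows in Fin m
  have hinj : Set.InjOn R ↑(Finset.range (m+1)) := by
    intro s hs t ht he
    simp only [Finset.coe_range, Set.mem_Iio] at hs ht
    exact hR s hs t ht he
  have hcard := Finset.card_image_of_injOn hinj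
  have hle := Finset.card_le_univ ((Finset.range (m+1)).image R)
  rw [hcard] at hle
  simp only [Finset.card_range, Finset.card_univ, Fintype.card_fin] at hle
  omega


end TradeAux

/-- If `M` and `N` have equal row sums and equal column sums, then `N` can be obtained
from `M` by a finite sequence of trades, i.e. `(M, N)` lies in the
reflexive–transitive closure of the trade relation. -/
theorem trade_chain_connectivity {m n : ℕ} (M N : Fin m → Fin n → Bool)
    (hrow : ∀ i, rowSum M i = rowSum N i) (hcol : ∀ c, colSum M c = colSum N c) :
    Relation.ReflTransGen TradeRel M N := by
  classical
  suffices H : ∀ d (M : Fin m → Fin n → Bool), TradeAux.diffW M N = d →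
      (∀ i, rowSum M i = rowSum N i) → (∀ c, colSum M c = colSum N c) →
      Relation.ReflTransGen TradeRel M N from H _ M rfl hrow hcol
  intro d
  induction d using Nat.strong_induction_on with
  | _ d IH =>
  intro M hd hrowM hcolM
  by_cases h0 : TradeAux.diffW M N = 0
  · rw [TradeAux.eq_of_diffW_eq_zero h0]
  · obtain ⟨k, R, C, hcyc⟩ := TradeAux.exists_cycle hrowM hcolM h0
    obtain ⟨M1, hM1rtg, hM1lt⟩ := TradeAux.cycle_step N k M R C hcyc
    have hrow1 : ∀ i, rowSum M1 i = rowSum N i := fun i =>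
      (TradeAux.rtg_rowSum hM1rtg i).trans (hrowM i)
    have hcol1 : ∀ c, colSum M1 c = colSum N c := fun c =>
      (TradeAux.rtg_colSum hM1rtg c).trans (hcolM c)
    have := IH (TradeAux.diffW M1 N) (by omega) M1 rfl hrow1 hcol1
    exact hM1rtg.trans this
end

section
/- Every trade of size s can be realized as a sequence of s checkerboard swaps: if N : Fin m → Fin n → Bool is obtained from M by a trade of size s between rows i and j, then there is a chain M = M₀, M₁, …, M_s = N in which each M_{t+1} is obtained from M_t by a single checkerboard swap (involving rows i and j). -/
/-- `N` is obtained from `M` by a single checkerboard swap involving rows `i` and `j`. -/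
def IsSwapBetween {m n : ℕ} (M N : Fin m → Fin n → Bool) (i j : Fin m) : Prop :=
  ∃ (k l : Fin n), i ≠ j ∧ k ≠ l ∧
    M i k = true ∧ M i l = false ∧ M j k = false ∧ M j l = true ∧
    N i k = false ∧ N i l = true ∧ N j k = true ∧ N j l = false ∧
    ∀ r c, ((r ≠ i ∧ r ≠ j) ∨ (c ≠ k ∧ c ≠ l)) → N r c = M r c

lemma aux_trade {m n : ℕ} (s : ℕ) :
    ∀ (M N : Fin m → Fin n → Bool) (i j : Fin m) (A' B' : Finset (Fin n)),
    i ≠ j → A'.card = B'.card → A'.card = s →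
    (∀ c ∈ A', M i c = true ∧ M j c = false) →
    (∀ c ∈ B', M j c = true ∧ M i c = false) →
    (∀ c, N i c = if c ∈ A' then false else if c ∈ B' then true else M i c) →
    (∀ c, N j c = if c ∈ A' then true else if c ∈ B' then false else M j c) →
    (∀ r, r ≠ i → r ≠ j → ∀ c, N r c = M r c) →
    ∃ f : Fin (s + 1) → (Fin m → Fin n → Bool),
      f 0 = M ∧ f (Fin.last s) = N ∧
        ∀ t : Fin s, IsSwapBetween (f t.castSucc) (f t.succ) i j := by
  induction s with
  | zero =>
    intro M N i j A' B' hij hcard hs h4 h5 h6 h7 h8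
    have hA : A' = ∅ := Finset.card_eq_zero.mp hs
    have hB : B' = ∅ := Finset.card_eq_zero.mp (hcard ▸ hs)
    subst hA hB
    have hMN : N = M := by
      funext r c
      by_cases hr : r = i
      · subst hr; simpa using h6 c
      · by_cases hr' : r = j
        · subst hr'; simpa using h7 c
        · exact h8 r hr hr' c
    exact ⟨fun _ => M, rfl, by simp [hMN], fun t => t.elim0⟩
  | succ s ih =>
    intro M N i j A' B' hij hcard hs h4 h5 h6 h7 h8
    obtain ⟨a, ha⟩ : A'.Nonempty := Finset.card_pos.mp (by omega)
    obtain ⟨b, hb⟩ : B'.Nonempty := Finset.card_pos.mp (by omega)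
    have hMia : M i a = true := (h4 a ha).1
    have hMja : M j a = false := (h4 a ha).2
    have hMjb : M j b = true := (h5 b hb).1
    have hMib : M i b = false := (h5 b hb).2
    have hab : a ≠ b := fun e => by rw [e, hMib] at hMia; exact Bool.noConfusion hMia
    have hbA : b ∉ A' := fun hbA => by
      have := (h4 b hbA).1; rw [hMib] at this; exact Bool.noConfusion this
    have haB : a ∉ B' := fun haB => by
      have := (h5 a haB).2; rw [hMia] at this; exact Bool.noConfusion this
    set M₁ : Fin m → Fin n → Bool := fun r c =>
      if r = i ∧ c = a then false else if r = i ∧ c = b then true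
      else if r = j ∧ c = a then true else if r = j ∧ c = b then false
      else M r c with hM₁
    have hji : j ≠ i := hij.symm
    have hM₁ia : M₁ i a = false := by simp [hM₁]
    have hM₁ib : M₁ i b = true := by simp [hM₁, hab, Ne.symm hab]
    have hM₁ja : M₁ j a = true := by simp [hM₁, hij.symm]
    have hM₁jb : M₁ j b = false := by simp [hM₁, hij.symm, hab, Ne.symm hab]
    have hM₁other : ∀ r c, ((r ≠ i ∧ r ≠ j) ∨ (c ≠ a ∧ c ≠ b)) → M₁ r c = M r c := by
      intro r c hrc
      rcases hrc with ⟨h1, h2⟩ | ⟨h1, h2⟩ <;> simp [hM₁, h1, h2]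
    have hswap : IsSwapBetween M M₁ i j :=
      ⟨a, b, hij, hab, hMia, hMib, hMja, hMjb, hM₁ia, hM₁ib, hM₁ja, hM₁jb, hM₁other⟩
    -- trade from M₁ to N on erased sets
    have hA'card : (A'.erase a).card = s := by
      rw [Finset.card_erase_of_mem ha, hs]; omega
    have hB'card : (B'.erase b).card = s := by
      rw [Finset.card_erase_of_mem hb, ← hcard, hs]; omega
    have key : ∀ c, c ≠ a → c ≠ b → M₁ i c = M i c ∧ M₁ j c = M j c := by
      intro c h1 h2; exact ⟨hM₁other i c (Or.inr ⟨h1, h2⟩), hM₁other j c (Or.inr ⟨h1, h2⟩)⟩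
    have h4' : ∀ c ∈ A'.erase a, M₁ i c = true ∧ M₁ j c = false := by
      intro c hc
      have hca : c ≠ a := Finset.ne_of_mem_erase hc
      have hcA : c ∈ A' := Finset.mem_of_mem_erase hc
      have hcb : c ≠ b := fun e => hbA (e ▸ hcA)
      rw [(key c hca hcb).1, (key c hca hcb).2]; exact h4 c hcA
    have h5' : ∀ c ∈ B'.erase b, M₁ j c = true ∧ M₁ i c = false := by
      intro c hc
      have hcb : c ≠ b := Finset.ne_of_mem_erase hc
      have hcB : c ∈ B' := Finset.mem_of_mem_erase hc
      have hca : c ≠ a := fun e => haB (e ▸ hcB)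
      rw [(key c hca hcb).1, (key c hca hcb).2]; exact h5 c hcB
    have h6' : ∀ c, N i c = if c ∈ A'.erase a then false else if c ∈ B'.erase b then true
        else M₁ i c := by
      intro c
      by_cases hca : c = a
      · rw [hca]
        simp [Finset.notMem_erase, hab, haB, hM₁ia, h6 a, ha]
      · by_cases hcb : c = b
        · rw [hcb]
          simp [Finset.notMem_erase, hbA, hM₁ib, h6 b, hb]
        · rw [(key c hca hcb).1]
          simp only [Finset.mem_erase, ne_eq, hca, hcb, not_false_eq_true, true_and]
          exact h6 c
    have h7' : ∀ c, N j c = if c ∈ A'.erase a then true else if c ∈ B'.erase b then false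
        else M₁ j c := by
      intro c
      by_cases hca : c = a
      · rw [hca]
        simp [Finset.notMem_erase, hab, haB, hM₁ja, h7 a, ha]
      · by_cases hcb : c = b
        · rw [hcb]
          simp [Finset.notMem_erase, hbA, hM₁jb, h7 b, hb]
        · rw [(key c hca hcb).2]
          simp only [Finset.mem_erase, ne_eq, hca, hcb, not_false_eq_true, true_and]
          exact h7 c
    have h8' : ∀ r, r ≠ i → r ≠ j → ∀ c, N r c = M₁ r c := by
      intro r hri hrj c
      rw [hM₁other r c (Or.inl ⟨hri, hrj⟩)]; exact h8 r hri hrj c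
    obtain ⟨g, hg0, hglast, hgswap⟩ :=
      ih M₁ N i j (A'.erase a) (B'.erase b) hij (by rw [hA'card, hB'card]) hA'card
        h4' h5' h6' h7' h8'
    refine ⟨Fin.cases M g, by simp, ?_, ?_⟩
    · show Fin.cases M g (Fin.last (s+1)) = N
      rw [← Fin.succ_last, Fin.cases_succ, hglast]
    · intro t
      induction t using Fin.cases with
      | zero =>
        show IsSwapBetween (Fin.cases M g (Fin.castSucc 0)) (Fin.cases M g (Fin.succ 0)) i j
        rw [Fin.castSucc_zero, Fin.cases_zero, Fin.cases_succ, hg0]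
        exact hswap
      | succ t' =>
        show IsSwapBetween (Fin.cases M g (t'.succ).castSucc) (Fin.cases M g (t'.succ).succ) i j
        rw [← Fin.succ_castSucc, Fin.cases_succ, Fin.cases_succ]
        exact hgswap t'

/-- Every trade of size `s` can be realized as a sequence of `s` checkerboard swaps:
there is a chain `M = M₀, M₁, …, M_s = N` in which each `M_{t+1}` is obtained from
`M_t` by a single checkerboard swap involving rows `i` and `j`. -/
theorem trade_is_sequence_of_swaps {m n : ℕ} (M N : Fin m → Fin n → Bool)
    (i j : Fin m) (A' B' : Finset (Fin n)) (s : ℕ)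
    (h : IsTrade M N i j A' B') (hs : A'.card = s) :
    ∃ f : Fin (s + 1) → (Fin m → Fin n → Bool),
      f 0 = M ∧ f (Fin.last s) = N ∧
        ∀ t : Fin s, IsSwapBetween (f t.castSucc) (f t.succ) i j := by
  obtain ⟨hij, -, hcard, h4, h5, h6, h7, h8⟩ := h
  exact aux_trade s M N i j A' B' hij hcard hs h4 h5 h6 h7 h8
end

section
/- If a presence–absence matrix M : Fin m → Fin n → Bool contains exactly one checkerboard unit (there is exactly one choice of an unordered pair of rows {i, j} together with an unordered pair of columns {k, l} forming a checkerboard unit), then M admits exactly one alternative configuration: there is exactly one matrix N ≠ M with the same row sums and the same column sums as M, namely the matrix obtained from M by swapping that checkerboard unit. -/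
/-- The unordered pair of rows `{i, j}` together with the unordered pair of columns
`{k, l}` forms a checkerboard unit of `M`: the 2×2 submatrix has ones on exactly one
diagonal and zeros on the other. -/
def IsCheckerboardUnit {m n : ℕ} (M : Fin m → Fin n → Bool)
    (i j : Fin m) (k l : Fin n) : Prop :=
  (M i k = true ∧ M i l = false ∧ M j k = false ∧ M j l = true) ∨
  (M i k = false ∧ M i l = true ∧ M j k = true ∧ M j l = false)

/-- The matrix obtained from `M` by swapping the checkerboard unit on rows `i, j` and
columns `k, l`: the four entries are replaced by the opposite diagonal pattern, all
other entries are unchanged. -/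
def swapCheckerboard {m n : ℕ} (M : Fin m → Fin n → Bool)
    (i j : Fin m) (k l : Fin n) : Fin m → Fin n → Bool :=
  fun r c => if (r = i ∨ r = j) ∧ (c = k ∨ c = l) then !(M r c) else M r c

open Finset Function

theorem Nat.add_one_mod_of_add_one_lt {u t : ℕ} (h : u % t + 1 < t) : (u + 1) % t = u % t + 1 := by
  rw [← Nat.mod_add_mod, Nat.mod_eq_of_lt h]

theorem Nat.add_one_mod_of_add_one_eq {u t : ℕ} (h : u % t + 1 = t) : (u + 1) % t = 0 := by
  rw [← Nat.mod_add_mod, h, Nat.mod_self]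

theorem Nat.not_add_modEq_self {v t : ℕ} (hv : 0 < v) (hvt : v < t) (s : ℕ) :
    ¬ v + s ≡ s [MOD t] := by
  intro h
  have h0 : v ≡ 0 [MOD t] := Nat.ModEq.add_right_cancel' s (by rwa [zero_add])
  rw [Nat.ModEq, Nat.mod_eq_of_lt hvt, Nat.zero_mod] at h0
  omega

theorem Finset.card_filter_comp_equiv {ι : Type*} [Fintype ι] (f : ι → Bool) (e : ι ≃ ι) :
    (univ.filter fun x => f (e x) = true).card = (univ.filter fun x => f x = true).card :=
  Finset.card_equiv e (by simp)

theorem Finset.exists_false_true_of_card_filter_eq {ι : Type*} [Fintype ι] {f g : ι → Bool}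
    (hfg : (univ.filter fun x => f x = true).card = (univ.filter fun x => g x = true).card)
    {x : ι} (hfx : f x = true) (hgx : g x = false) : ∃ y, f y = false ∧ g y = true := by
  by_contra! hcon
  have hsub : (univ.filter fun x => g x = true) ⊂ (univ.filter fun x => f x = true) := by
    refine (Finset.ssubset_iff_of_subset fun y hy => ?_).mpr ⟨x, by simp [hfx], by simp [hgx]⟩
    simp only [mem_filter, mem_univ, true_and] at hy ⊢
    by_contra hfy
    exact hcon y (by simpa using hfy) hy
  exact (Finset.card_lt_card hsub).ne' hfg

section AltCycle

variable {α β : Type*} {P Q : α → β → Prop} {t : ℕ} {R : ℕ → α} {C : ℕ → β}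

def IsAltWalk (P Q : α → β → Prop) (R : ℕ → α) (C : ℕ → β) : Prop :=
  ∀ s, P (R s) (C s) ∧ Q (R (s + 1)) (C s)

/-- The closed walk `R 0, C 0, R 1, C 1, …` of length `t` through rows and columns, stored as
`t`-periodic sequences. -/
structure IsAltCycle (P Q : α → β → Prop) (t : ℕ) (R : ℕ → α) (C : ℕ → β) : Prop where
  pos : 0 < t
  periodic_row : Periodic R t
  periodic_col : Periodic C t
  walk : IsAltWalk P Q R C

/-- The segment `R (x + 1), C (x + 1), …, R y, C y = C x` closes up. -/
theorem IsAltWalk.exists_isAltCycle_of_col_eq (h : IsAltWalk P Q R C) {x y : ℕ} (hxy : x < y)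
    (hC : C x = C y) : ∃ R' C', IsAltCycle P Q (y - x) R' C' := by
  set L := y - x
  have hL : 0 < L := Nat.sub_pos_of_lt hxy
  refine ⟨fun u => R (x + 1 + u % L), fun u => C (x + 1 + u % L), hL, fun u => by simp,
    fun u => by simp, fun u => ⟨(h _).1, ?_⟩⟩
  obtain hu | hu : u % L + 1 < L ∨ u % L + 1 = L := Nat.lt_or_eq_of_le (Nat.mod_lt u hL)
  · rw [Nat.add_one_mod_of_add_one_lt hu, ← add_assoc]
    exact (h (x + 1 + u % L)).2
  · rw [Nat.add_one_mod_of_add_one_eq hu, add_zero, add_right_comm x 1, add_assoc, hu,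
      Nat.add_sub_cancel' hxy.le, ← hC]
    exact (h x).2

theorem IsAltWalk.exists_isAltCycle [Finite β] (h : IsAltWalk P Q R C) :
    ∃ t R' C', IsAltCycle P Q t R' C' := by
  obtain ⟨x, y, hne, hxy⟩ := Finite.exists_ne_map_eq_of_infinite C
  rcases Nat.lt_or_gt_of_ne hne with hlt | hlt
  exacts [⟨_, h.exists_isAltCycle_of_col_eq hlt hxy⟩,
    ⟨_, h.exists_isAltCycle_of_col_eq hlt hxy.symm⟩]

theorem exists_isAltWalk (hP : ∃ r c, P r c) (hPQ : ∀ r c, P r c → ∃ r', Q r' c)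
    (hQP : ∀ r c, Q r c → ∃ c', P r c') : ∃ R C, IsAltWalk P Q R C := by
  obtain ⟨r₀, c₀, h₀⟩ := hP
  have step : ∀ x : α × β, ∃ y : α × β, P x.1 x.2 → P y.1 y.2 ∧ Q y.1 x.2 := by
    rintro ⟨r, c⟩
    by_cases h : P r c
    · obtain ⟨r', hr'⟩ := hPQ r c h
      obtain ⟨c', hc'⟩ := hQP r' c hr'
      exact ⟨(r', c'), fun _ => ⟨hc', hr'⟩⟩
    · exact ⟨(r, c), fun h' => absurd h' h⟩
  choose next hnext using step
  have hiter : ∀ s, P (next^[s] (r₀, c₀)).1 (next^[s] (r₀, c₀)).2 := by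
    intro s
    induction s with
    | zero => exact h₀
    | succ s ih => rw [iterate_succ_apply']; exact (hnext _ ih).1
  refine ⟨fun s => (next^[s] (r₀, c₀)).1, fun s => (next^[s] (r₀, c₀)).2, fun s => ⟨hiter s, ?_⟩⟩
  simp only [iterate_succ_apply']
  exact (hnext _ (hiter s)).2

/-- A shortest cycle works: a repeated column would close a shorter one. -/
theorem exists_isAltCycle_col_modEq (h : ∃ t R C, IsAltCycle P Q t R C) :
    ∃ t R C, IsAltCycle P Q t R C ∧ ∀ x y, C x = C y → x ≡ y [MOD t] := by
  classical
  obtain ⟨R, C, hcyc⟩ := Nat.find_spec h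
  refine ⟨_, R, C, hcyc, fun x y hxy => ?_⟩
  have shorter : ∀ a b, a < b → b < Nat.find h → C a ≠ C b := fun a b hab hb hC =>
    Nat.find_min h (by omega : b - a < Nat.find h) (hcyc.walk.exists_isAltCycle_of_col_eq hab hC)
  rw [← hcyc.periodic_col.map_mod_nat x, ← hcyc.periodic_col.map_mod_nat y] at hxy
  by_contra hne
  rcases Nat.lt_or_gt_of_ne hne with hlt | hlt
  exacts [shorter _ _ hlt (Nat.mod_lt _ hcyc.pos) hxy,
    shorter _ _ hlt (Nat.mod_lt _ hcyc.pos) hxy.symm]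

namespace IsAltCycle

theorem mono {P' Q' : α → β → Prop} (h : IsAltCycle P Q t R C) (hP : ∀ r c, P r c → P' r c)
    (hQ : ∀ r c, Q r c → Q' r c) : IsAltCycle P' Q' t R C :=
  ⟨h.pos, h.periodic_row, h.periodic_col, fun s => ⟨hP _ _ (h.walk s).1, hQ _ _ (h.walk s).2⟩⟩

theorem rotate (h : IsAltCycle P Q t R C) (a : ℕ) :
    IsAltCycle P Q t (fun s => R (s + a)) (fun s => C (s + a)) :=
  ⟨h.pos, h.periodic_row.add_const a, h.periodic_col.add_const a, fun s => by
    simpa only [add_right_comm s 1 a] using h.walk (s + a)⟩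

/-- Skipping `R 1` and `C 0` along the chord `(R 0, C 1)`. -/
theorem shortcut (h : IsAltCycle P Q (t + 1) R C) (ht : 0 < t) (hchord : P (R 0) (C 1)) :
    IsAltCycle P Q t (fun u => R (if u % t = 0 then 0 else u % t + 1))
      (fun u => C (u % t + 1)) where
  pos := ht
  periodic_row u := by simp
  periodic_col u := by simp
  walk u := by
    dsimp only
    constructor
    · split_ifs with h0
      · rwa [h0]
      · exact (h.walk _).1
    · obtain hu | hu : u % t + 1 < t ∨ u % t + 1 = t := Nat.lt_or_eq_of_le (Nat.mod_lt u ht)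
      · rw [Nat.add_one_mod_of_add_one_lt hu, if_neg (Nat.succ_ne_zero _)]
        exact (h.walk _).2
      · rw [Nat.add_one_mod_of_add_one_eq hu, if_pos rfl, hu, ← h.periodic_row 0, zero_add]
        exact (h.walk t).2

theorem mem_of_two (h : IsAltCycle P Q 2 R C) {r : α} {c : β} (hr : r ∈ s(R 0, R 1))
    (hc : c ∈ s(C 0, C 1)) : P r c ∨ Q r c := by
  rw [Sym2.mem_iff] at hr hc
  rcases hr with rfl | rfl <;> rcases hc with rfl | rfl
  · exact Or.inl (h.walk 0).1
  · exact Or.inr (h.periodic_row 0 ▸ (h.walk 1).2)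
  · exact Or.inr (h.walk 0).2
  · exact Or.inl (h.walk 1).1

end IsAltCycle

end AltCycle

section Checkerboard

variable {m n : ℕ} {M N : Fin m → Fin n → Bool} {i j a b : Fin m} {k l c d : Fin n}

namespace IsCheckerboardUnit

theorem symm_rows (h : IsCheckerboardUnit M a b c d) : IsCheckerboardUnit M b a c d := by
  unfold IsCheckerboardUnit at *; tauto

theorem symm_cols (h : IsCheckerboardUnit M a b c d) : IsCheckerboardUnit M a b d c := by
  unfold IsCheckerboardUnit at *; tauto

theorem rows_ne (h : IsCheckerboardUnit M a b c d) : a ≠ b := by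
  rintro rfl
  rcases h with ⟨h₁, -, h₂, -⟩ | ⟨h₁, -, h₂, -⟩ <;> simp [h₁] at h₂

theorem cols_ne (h : IsCheckerboardUnit M a b c d) : c ≠ d := by
  rintro rfl
  rcases h with ⟨h₁, h₂, -⟩ | ⟨h₁, h₂, -⟩ <;> simp [h₁] at h₂

theorem transpose (h : IsCheckerboardUnit M i j k l) :
    IsCheckerboardUnit (fun c r => M r c) k l i j := by
  unfold IsCheckerboardUnit at *; tauto

theorem eq_of_unique
    (huniq : ∀ (i' j' : Fin m) (k' l' : Fin n), i' < j' → k' < l' →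
      IsCheckerboardUnit M i' j' k' l' → i' = i ∧ j' = j ∧ k' = k ∧ l' = l)
    (h : IsCheckerboardUnit M a b c d) : s(a, b) = s(i, j) ∧ s(c, d) = s(k, l) := by
  rcases h.rows_ne.lt_or_gt with hab | hab <;> rcases h.cols_ne.lt_or_gt with hcd | hcd
  · obtain ⟨rfl, rfl, rfl, rfl⟩ := huniq a b c d hab hcd h
    exact ⟨rfl, rfl⟩
  · obtain ⟨rfl, rfl, rfl, rfl⟩ := huniq a b d c hab hcd h.symm_cols
    exact ⟨rfl, Sym2.eq_swap⟩
  · obtain ⟨rfl, rfl, rfl, rfl⟩ := huniq b a c d hab hcd h.symm_rows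
    exact ⟨Sym2.eq_swap, rfl⟩
  · obtain ⟨rfl, rfl, rfl, rfl⟩ := huniq b a d c hab hcd h.symm_rows.symm_cols
    exact ⟨Sym2.eq_swap, Sym2.eq_swap⟩

theorem of_ne (h : IsCheckerboardUnit M i j k l)
    (hN : ∀ r ∈ s(i, j), ∀ c ∈ s(k, l), N r c ≠ M r c) : IsCheckerboardUnit N i j k l := by
  have hneg : ∀ r ∈ s(i, j), ∀ c ∈ s(k, l), N r c = !M r c :=
    fun r hr c hc => Bool.eq_not_iff.mpr (hN r hr c hc)
  unfold IsCheckerboardUnit at *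
  simp only [hneg i (Sym2.mem_mk_left i j), hneg j (Sym2.mem_mk_right i j),
    Sym2.mem_mk_left, Sym2.mem_mk_right, Bool.not_eq_true', Bool.not_eq_false']
  tauto

end IsCheckerboardUnit

theorem swapCheckerboard_apply_of_mem {r : Fin m} {c : Fin n} (hr : r ∈ s(i, j))
    (hc : c ∈ s(k, l)) : swapCheckerboard M i j k l r c = !M r c := by
  rw [Sym2.mem_iff] at hr hc
  simp [swapCheckerboard, hr, hc]

theorem swapCheckerboard_ne : swapCheckerboard M i j k l ≠ M := fun h => by
  simpa [swapCheckerboard_apply_of_mem (Sym2.mem_mk_left i j) (Sym2.mem_mk_left k l)]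
    using congrFun₂ h i k

theorem swapCheckerboard_swapCheckerboard :
    swapCheckerboard (swapCheckerboard M i j k l) i j k l = M := by
  funext r c
  unfold swapCheckerboard
  split_ifs <;> simp

theorem swapCheckerboard_transpose :
    swapCheckerboard (fun c r => M r c) k l i j = fun c r => swapCheckerboard M i j k l r c := by
  funext c r
  simp only [swapCheckerboard, and_comm]

theorem IsCheckerboardUnit.rowSum_swapCheckerboard (h : IsCheckerboardUnit M i j k l) (r : Fin m) :
    rowSum (swapCheckerboard M i j k l) r = rowSum M r := by
  by_cases hr : r = i ∨ r = j
  · have hkl : M r l = !M r k := by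
      rcases hr with rfl | rfl <;> rcases h with h | h <;> simp [h]
    have hrow : swapCheckerboard M i j k l r = M r ∘ Equiv.swap k l := by
      funext c
      by_cases hck : c = k
      · subst hck; simp [swapCheckerboard, hr, hkl]
      by_cases hcl : c = l
      · subst hcl; simp [swapCheckerboard, hr, hkl]
      simp [swapCheckerboard, hck, hcl, Equiv.swap_apply_of_ne_of_ne]
    unfold rowSum
    rw [hrow]
    exact card_filter_comp_equiv (M r) (Equiv.swap k l)
  · unfold rowSum
    simp [swapCheckerboard, hr]

theorem IsCheckerboardUnit.colSum_swapCheckerboard (h : IsCheckerboardUnit M i j k l) (c : Fin n) :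
    colSum (swapCheckerboard M i j k l) c = colSum M c := by
  have := h.transpose.rowSum_swapCheckerboard c
  rwa [swapCheckerboard_transpose] at this

end Checkerboard

namespace IsAltCycle

variable {m n t : ℕ} {M : Fin m → Fin n → Bool} {R : ℕ → Fin m} {C : ℕ → Fin n}

theorem two_le (h : IsAltCycle (M · · = false) (M · · = true) t R C) : 2 ≤ t := by
  by_contra! ht
  obtain rfl : t = 1 := by have := h.pos; omega
  have h₁ := (h.walk 0).2
  rw [h.periodic_row 0, (h.walk 0).1] at h₁
  exact Bool.false_ne_true h₁

theorem isCheckerboardUnit_of_chord (h : IsAltCycle (M · · = false) (M · · = true) t R C) (s : ℕ)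
    (hchord : M (R s) (C (s + 1)) = true) :
    IsCheckerboardUnit M (R s) (R (s + 1)) (C s) (C (s + 1)) :=
  Or.inr ⟨(h.walk s).1, hchord, (h.walk s).2, (h.walk (s + 1)).1⟩

theorem isCheckerboardUnit_of_two (h : IsAltCycle (M · · = false) (M · · = true) 2 R C) :
    IsCheckerboardUnit M (R 0) (R 1) (C 0) (C 1) :=
  h.isCheckerboardUnit_of_chord 0 (h.periodic_row 0 ▸ (h.walk 1).2)

theorem exists_isCheckerboardUnit (h : IsAltCycle (M · · = false) (M · · = true) t R C) :
    ∃ a b c d, IsCheckerboardUnit M (R a) (R b) (C c) (C d) := by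
  induction t using Nat.strong_induction_on generalizing R C with
  | _ t ih =>
  obtain ⟨t, rfl⟩ : ∃ t', t = t' + 1 := ⟨t - 1, by have := h.two_le; omega⟩
  cases hchord : M (R 0) (C 1)
  · obtain ⟨a, b, c, d, hu⟩ := ih t (by omega) (h.shortcut (by have := h.two_le; omega) hchord)
    exact ⟨_, _, _, _, hu⟩
  · exact ⟨_, _, _, _, h.isCheckerboardUnit_of_chord 0 hchord⟩

section SameColumns

variable {p : Sym2 (Fin n)} (hp : ∀ a b c d, IsCheckerboardUnit M a b c d → s(c, d) = p)
  (hinj : ∀ x y, C x = C y → x ≡ y [MOD t])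
include hp hinj

/-- If the chord `(R s, C (s + 1))` is not a unit, shortcutting along it leaves a cycle, whose
units avoid the column `C s`. -/
theorem col_pair_eq_of_mem (h : IsAltCycle (M · · = false) (M · · = true) t R C) (s : ℕ)
    (hs : C s ∈ p) : s(C s, C (s + 1)) = p := by
  cases hchord : M (R s) (C (s + 1))
  · exfalso
    obtain ⟨t, rfl⟩ : ∃ t', t = t' + 1 := ⟨t - 1, by have := h.two_le; omega⟩
    have ht : 0 < t := by have := h.two_le; omega
    have hchord' : M (R (0 + s)) (C (1 + s)) = false := by rwa [zero_add, add_comm]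
    obtain ⟨a, b, c, d, hu⟩ := ((h.rotate s).shortcut ht hchord').exists_isCheckerboardUnit
    have hne : ∀ v, C s ≠ C (v % t + 1 + s) := fun v hv =>
      Nat.not_add_modEq_self (Nat.succ_pos _) (by have := Nat.mod_lt v ht; omega) s
        (hinj _ _ hv).symm
    rw [← hp _ _ _ _ hu, Sym2.mem_iff] at hs
    rcases hs with hs | hs
    exacts [hne c hs, hne d hs]
  · exact hp _ _ _ _ (h.isCheckerboardUnit_of_chord s hchord)

theorem le_two (h : IsAltCycle (M · · = false) (M · · = true) t R C) : t ≤ 2 := by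
  by_contra! ht
  obtain ⟨a, b, c, d, hu⟩ := h.exists_isCheckerboardUnit
  have h₀ := h.col_pair_eq_of_mem hp hinj c (hp _ _ _ _ hu ▸ Sym2.mem_mk_left _ _)
  have h₁ := h.col_pair_eq_of_mem hp hinj (c + 1) (h₀ ▸ Sym2.mem_mk_right _ _)
  rcases Sym2.eq_iff.mp (h₁.trans h₀.symm) with ⟨h₂, -⟩ | ⟨-, h₂⟩
  · exact Nat.not_add_modEq_self Nat.one_pos (by omega : 1 < t) c
      (by rw [add_comm]; exact hinj _ _ h₂)
  · exact Nat.not_add_modEq_self Nat.two_pos ht c (by rw [add_comm]; exact hinj _ _ h₂)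

end SameColumns

end IsAltCycle

section Uniqueness

variable {m n : ℕ} {M N : Fin m → Fin n → Bool} {i j : Fin m} {k l : Fin n}

theorem ne_on_unit_of_margins_eq
    (hu : ∀ a b c d, IsCheckerboardUnit M a b c d → s(a, b) = s(i, j) ∧ s(c, d) = s(k, l))
    (hNM : N ≠ M) (hrow : ∀ r, rowSum N r = rowSum M r) (hcol : ∀ c, colSum N c = colSum M c) :
    ∀ r ∈ s(i, j), ∀ c ∈ s(k, l), N r c ≠ M r c := by
  intro r hr c hc
  set P : Fin m → Fin n → Prop := fun r c => M r c = false ∧ N r c = true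
  set Q : Fin m → Fin n → Prop := fun r c => M r c = true ∧ N r c = false
  have hQP : ∀ r c, Q r c → ∃ c', P r c' := fun r c h =>
    exists_false_true_of_card_filter_eq (hrow r).symm h.1 h.2
  have hPQ : ∀ r c, P r c → ∃ r', Q r' c := fun r c h =>
    (exists_false_true_of_card_filter_eq (hcol c) h.2 h.1).imp fun _ => And.symm
  have hP : ∃ r c, P r c := by
    obtain ⟨r, c, hrc⟩ : ∃ r c, N r c ≠ M r c := by
      by_contra! h
      exact hNM (funext₂ h)
    cases hM : M r c
    · exact ⟨r, c, hM, by simpa [hM] using hrc⟩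
    · exact ⟨r, hQP r c ⟨hM, by simpa [hM] using hrc⟩⟩
  obtain ⟨R, C, hwalk⟩ := exists_isAltWalk hP hPQ hQP
  obtain ⟨t, R, C, hcyc, hinj⟩ := exists_isAltCycle_col_modEq hwalk.exists_isAltCycle
  have hM := hcyc.mono (fun _ _ => And.left) (fun _ _ => And.left)
  obtain rfl : t = 2 := le_antisymm (hM.le_two (fun a b c d h => (hu a b c d h).2) hinj) hM.two_le
  obtain ⟨hrows, hcols⟩ := hu _ _ _ _ hM.isCheckerboardUnit_of_two
  rw [← hrows] at hr
  rw [← hcols] at hc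
  rcases hcyc.mem_of_two hr hc with h | h <;> simp [h.1, h.2]

end Uniqueness

theorem unique_checkerboard_unique_alternative_general {m n : ℕ} (M : Fin m → Fin n → Bool)
    (i j : Fin m) (k l : Fin n)
    (hcb : IsCheckerboardUnit M i j k l)
    (huniq : ∀ (i' j' : Fin m) (k' l' : Fin n), i' < j' → k' < l' →
        IsCheckerboardUnit M i' j' k' l' → i' = i ∧ j' = j ∧ k' = k ∧ l' = l) :
    (swapCheckerboard M i j k l ≠ M ∧
      (∀ r, rowSum (swapCheckerboard M i j k l) r = rowSum M r) ∧
      (∀ c, colSum (swapCheckerboard M i j k l) c = colSum M c)) ∧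
    ∀ N : Fin m → Fin n → Bool, N ≠ M →
      (∀ r, rowSum N r = rowSum M r) → (∀ c, colSum N c = colSum M c) →
        N = swapCheckerboard M i j k l := by
  have hu : ∀ a b c d, IsCheckerboardUnit M a b c d → s(a, b) = s(i, j) ∧ s(c, d) = s(k, l) :=
    fun a b c d h => h.eq_of_unique huniq
  refine ⟨⟨swapCheckerboard_ne, hcb.rowSum_swapCheckerboard, hcb.colSum_swapCheckerboard⟩,
    fun N hNM hrow hcol => ?_⟩
  have hblock := ne_on_unit_of_margins_eq hu hNM hrow hcol
  have hN : IsCheckerboardUnit N i j k l := hcb.of_ne hblock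
  have hswap : swapCheckerboard N i j k l = M := by
    by_contra hne
    have hi := Sym2.mem_mk_left i j
    have hk := Sym2.mem_mk_left k l
    refine ne_on_unit_of_margins_eq hu hne (fun r => by rw [hN.rowSum_swapCheckerboard, hrow])
      (fun c => by rw [hN.colSum_swapCheckerboard, hcol]) i hi k hk ?_
    rw [swapCheckerboard_apply_of_mem hi hk, eq_comm, Bool.eq_not_iff]
    exact (hblock i hi k hk).symm
  rw [← hswap, swapCheckerboard_swapCheckerboard]

/-- If `M` contains exactly one checkerboard unit (a unique unordered pair of rows
together with a unique unordered pair of columns forming a checkerboard unit, unordered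
pairs being represented by `i < j` and `k < l`), then `M` admits exactly one alternative
configuration: there is exactly one matrix `N ≠ M` with the same row sums and column
sums as `M`, namely the matrix obtained from `M` by swapping that checkerboard unit. -/
theorem unique_checkerboard_unique_alternative {m n : ℕ} (M : Fin m → Fin n → Bool)
    (i j : Fin m) (k l : Fin n) (hij : i < j) (hkl : k < l)
    (hcb : IsCheckerboardUnit M i j k l)
    (huniq : ∀ (i' j' : Fin m) (k' l' : Fin n), i' < j' → k' < l' →
        IsCheckerboardUnit M i' j' k' l' → i' = i ∧ j' = j ∧ k' = k ∧ l' = l) :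
    (swapCheckerboard M i j k l ≠ M ∧
      (∀ r, rowSum (swapCheckerboard M i j k l) r = rowSum M r) ∧
      (∀ c, colSum (swapCheckerboard M i j k l) c = colSum M c)) ∧
    ∀ N : Fin m → Fin n → Bool, N ≠ M →
      (∀ r, rowSum N r = rowSum M r) → (∀ c, colSum N c = colSum M c) →
        N = swapCheckerboard M i j k l :=
  unique_checkerboard_unique_alternative_general M i j k l hcb huniq
end
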